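/- arXiv:2409.14568 — 3 statements merged into one kernel-verified Lean document; each statement's English description precedes it below -/
import Mathlib

section
/- Fix N ∈ ℕ, functions Λ : ℝ^N → Fin N → Fin N → ℝ with Λ^{ij}(x) = −Λ^{ji}(x) for all i, j, x, and E : ℝ^N → Fin N → ℝ. For a function f : ℝ^N → ℝ let ι_f : ℝ^N × ℝ → ℝ be defined by ι_f(x,s) = s·f(x). Then for all differentiable f, g : ℝ^N → ℝ and all (x,s) with s ≠ 0, {ι_f, ι_g}_Π(x,s) = s·{f,g}_J(x); that is, ι_{{f,g}_J} = {ι_f, ι_g}_Π on ℝ^N × (ℝ ∖ {0}). (The Poissonization bracket of the degree-1 homogeneous functions representing two sections equals the degree-1 homogeneous function representing their Jacobi bracket.) -/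
open Finset

/-- The `i`-th partial derivative of a function `f : ℝ^N → ℝ`. -/
noncomputable def pd {N : ℕ} (f : (Fin N → ℝ) → ℝ) (x : Fin N → ℝ) (i : Fin N) : ℝ :=
  fderiv ℝ f x (Pi.single i 1)

/-- The partial derivative of `F : ℝ^N × ℝ → ℝ` in the `i`-th base direction `x^i`. -/
noncomputable def pdx {N : ℕ} (F : (Fin N → ℝ) × ℝ → ℝ) (p : (Fin N → ℝ) × ℝ)
    (i : Fin N) : ℝ :=
  fderiv ℝ F p (Pi.single i 1, 0)

/-- The partial derivative of `F : ℝ^N × ℝ → ℝ` in the fiber direction `s`. -/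
noncomputable def pds {N : ℕ} (F : (Fin N → ℝ) × ℝ → ℝ) (p : (Fin N → ℝ) × ℝ) : ℝ :=
  fderiv ℝ F p (0, 1)

/-- The Jacobi bracket on `ℝ^N` attached to the pair `(Λ, E)`:
`{f,g}_J = Λ^{ij} ∂_i f ∂_j g + f E^i ∂_i g − g E^i ∂_i f`. -/
noncomputable def jacobiBracket {N : ℕ} (Λ : (Fin N → ℝ) → Fin N → Fin N → ℝ)
    (E : (Fin N → ℝ) → Fin N → ℝ) (f g : (Fin N → ℝ) → ℝ) (x : Fin N → ℝ) : ℝ :=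
  (∑ i, ∑ j, Λ x i j * pd f x i * pd g x j)
    + f x * (∑ i, E x i * pd g x i) - g x * (∑ i, E x i * pd f x i)

/-- The Poissonization bracket on `ℝ^N × (ℝ ∖ {0})`:
`{F,G}_Π = s⁻¹ Λ^{ij} ∂_{x^i}F ∂_{x^j}G + E^i (∂_s F ∂_{x^i}G − ∂_{x^i}F ∂_s G)`. -/
noncomputable def poissonizationBracket {N : ℕ} (Λ : (Fin N → ℝ) → Fin N → Fin N → ℝ)
    (E : (Fin N → ℝ) → Fin N → ℝ) (F G : (Fin N → ℝ) × ℝ → ℝ)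
    (p : (Fin N → ℝ) × ℝ) : ℝ :=
  (p.2)⁻¹ * (∑ i, ∑ j, Λ p.1 i j * pdx F p i * pdx G p j)
    + ∑ i, E p.1 i * (pds F p * pdx G p i - pdx F p i * pds G p)

/-- The degree-1 homogeneous function on `ℝ^N × ℝ^×` representing a section `f`. -/
def iotaSec {N : ℕ} (f : (Fin N → ℝ) → ℝ) (p : (Fin N → ℝ) × ℝ) : ℝ :=
  p.2 * f p.1

/-! Since `ι_f(x, s) = s f(x)`, one has `∂_{x^i} ι_f = s ∂_i f` and `∂_s ι_f = f`; the factor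
`s⁻¹` in the Poissonization bracket cancels one of the two factors `s` in the `Λ`-term, and
the `E`-term is already linear in `s`. -/

lemma hasFDerivAt_iotaSec {N : ℕ} {f : (Fin N → ℝ) → ℝ} {p : (Fin N → ℝ) × ℝ}
    (hf : DifferentiableAt ℝ f p.1) :
    HasFDerivAt (iotaSec f)
      (p.2 • (fderiv ℝ f p.1).comp (ContinuousLinearMap.fst ℝ (Fin N → ℝ) ℝ)
        + f p.1 • ContinuousLinearMap.snd ℝ (Fin N → ℝ) ℝ) p :=
  hasFDerivAt_snd.mul (hf.hasFDerivAt.comp p hasFDerivAt_fst)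

lemma pdx_iotaSec {N : ℕ} {f : (Fin N → ℝ) → ℝ} {x : Fin N → ℝ} (hf : DifferentiableAt ℝ f x)
    (s : ℝ) (i : Fin N) :
    pdx (iotaSec f) (x, s) i = s * pd f x i := by
  simp [pdx, pd, (hasFDerivAt_iotaSec (p := (x, s)) hf).fderiv]

lemma pds_iotaSec {N : ℕ} {f : (Fin N → ℝ) → ℝ} {x : Fin N → ℝ} (hf : DifferentiableAt ℝ f x)
    (s : ℝ) :
    pds (iotaSec f) (x, s) = f x := by
  simp [pds, (hasFDerivAt_iotaSec (p := (x, s)) hf).fderiv]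

theorem poissonization_of_jacobi_bracket_general {N : ℕ}
    (Λ : (Fin N → ℝ) → Fin N → Fin N → ℝ)
    (E : (Fin N → ℝ) → Fin N → ℝ)
    (f g : (Fin N → ℝ) → ℝ) (hf : Differentiable ℝ f) (hg : Differentiable ℝ g) :
    ∀ (x : Fin N → ℝ) (s : ℝ), s ≠ 0 →
      poissonizationBracket Λ E (iotaSec f) (iotaSec g) (x, s) =
        s * jacobiBracket Λ E f g x := by
  intro x s hs
  have hΛ_term : s⁻¹ * ∑ i, ∑ j, Λ x i j * (s * pd f x i) * (s * pd g x j)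
      = s * ∑ i, ∑ j, Λ x i j * pd f x i * pd g x j := by
    simp only [mul_sum]
    refine sum_congr rfl fun i _ => sum_congr rfl fun j _ => ?_
    field_simp
  have hE_term : ∑ i, E x i * (f x * (s * pd g x i) - s * pd f x i * g x)
      = s * (f x * ∑ i, E x i * pd g x i - g x * ∑ i, E x i * pd f x i) := by
    simp only [mul_sub, mul_sum, sum_sub_distrib]
    congr 1 <;> exact sum_congr rfl fun i _ => by ring
  simp only [poissonizationBracket, jacobiBracket, pdx_iotaSec (hf x), pdx_iotaSec (hg x),
    pds_iotaSec (hf x), pds_iotaSec (hg x)]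
  rw [hΛ_term, hE_term]
  ring

/-- The Poissonization bracket of the degree-1 homogeneous functions representing two
sections equals the degree-1 homogeneous function representing their Jacobi bracket:
`ι_{{f,g}_J} = {ι_f, ι_g}_Π` on `ℝ^N × (ℝ ∖ {0})`. -/
theorem poissonization_of_jacobi_bracket {N : ℕ}
    (Λ : (Fin N → ℝ) → Fin N → Fin N → ℝ)
    (hΛ : ∀ (x : Fin N → ℝ) (i j : Fin N), Λ x i j = - Λ x j i)
    (E : (Fin N → ℝ) → Fin N → ℝ)
    (f g : (Fin N → ℝ) → ℝ) (hf : Differentiable ℝ f) (hg : Differentiable ℝ g) :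
    ∀ (x : Fin N → ℝ) (s : ℝ), s ≠ 0 →
      poissonizationBracket Λ E (iotaSec f) (iotaSec g) (x, s) =
        s * jacobiBracket Λ E f g x :=
  poissonization_of_jacobi_bracket_general Λ E f g hf hg
end

section
/- Fix N ∈ ℕ, smooth functions Λ : ℝ^N → Fin N → Fin N → ℝ with Λ^{ij}(x) = −Λ^{ji}(x), and smooth E : ℝ^N → Fin N → ℝ. Then the Poissonization bracket {·,·}_Π satisfies the Jacobi identity {F,{G,H}_Π}_Π + {G,{H,F}_Π}_Π + {H,{F,G}_Π}_Π = 0 at all points (x,s) with s ≠ 0, for all smooth F, G, H : ℝ^N × ℝ → ℝ, if and only if the Jacobi bracket {·,·}_J satisfies the Jacobi identity {f,{g,h}_J}_J + {g,{h,f}_J}_J + {h,{f,g}_J}_J = 0 for all smooth f, g, h : ℝ^N → ℝ. (This is the trivialized form of the one-to-one correspondence between Jacobi brackets and homogeneous Poisson structures of degree −1 on the associated ℝ^×-principal bundle.) -/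
open Finset

set_option linter.unusedVariables false

section FDV


variable {E : Type*} [NormedAddCommGroup E] [NormedSpace ℝ E]

/-- fderiv applied to a fixed vector, basic rules -/
lemma fdv_add {F G : E → ℝ} {p : E} (hF : DifferentiableAt ℝ F p)
    (hG : DifferentiableAt ℝ G p) (v : E) :
    fderiv ℝ (fun q => F q + G q) p v = fderiv ℝ F p v + fderiv ℝ G p v := by
  rw [fderiv_fun_add hF hG]; rfl

lemma fdv_sub {F G : E → ℝ} {p : E} (hF : DifferentiableAt ℝ F p)
    (hG : DifferentiableAt ℝ G p) (v : E) :
    fderiv ℝ (fun q => F q - G q) p v = fderiv ℝ F p v - fderiv ℝ G p v := by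
  rw [fderiv_fun_sub hF hG]; rfl

lemma fdv_neg {F : E → ℝ} {p : E} (v : E) :
    fderiv ℝ (fun q => -(F q)) p v = -(fderiv ℝ F p v) := by
  rw [fderiv_fun_neg]; rfl

lemma fdv_mul {F G : E → ℝ} {p : E} (hF : DifferentiableAt ℝ F p)
    (hG : DifferentiableAt ℝ G p) (v : E) :
    fderiv ℝ (fun q => F q * G q) p v = F p * fderiv ℝ G p v + G p * fderiv ℝ F p v := by
  rw [fderiv_fun_mul hF hG]; simp [smul_eq_mul]

lemma fdv_sum {ι : Type*} {u : Finset ι} {A : ι → E → ℝ} {p : E}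
    (h : ∀ i ∈ u, DifferentiableAt ℝ (A i) p) (v : E) :
    fderiv ℝ (fun q => ∑ i ∈ u, A i q) p v = ∑ i ∈ u, fderiv ℝ (A i) p v := by
  rw [fderiv_fun_sum h]; simp

lemma fdv_const {p : E} (c : ℝ) (v : E) :
    fderiv ℝ (fun _ : E => c) p v = 0 := by
  rw [fderiv_fun_const]; rfl

/-- smoothness of `q ↦ fderiv F q v` -/
lemma contDiff_fdv {F : E → ℝ} (hF : ContDiff ℝ (⊤ : ℕ∞) F) (v : E) :
    ContDiff ℝ (⊤ : ℕ∞) (fun q => fderiv ℝ F q v) := by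
  have h1 : ContDiff ℝ (⊤ : ℕ∞) (fderiv ℝ F) := hF.fderiv_right (by simp)
  exact (ContinuousLinearMap.apply ℝ ℝ v).contDiff.comp h1

lemma diffAt_fdv {F : E → ℝ} (hF : ContDiff ℝ (⊤ : ℕ∞) F) (v : E) (p : E) :
    DifferentiableAt ℝ (fun q => fderiv ℝ F q v) p :=
  ((contDiff_fdv hF v).differentiable (by simp)).differentiableAt

/-- second derivative via evaluation -/
lemma fderiv_fdv {F : E → ℝ} (hF : ContDiff ℝ (⊤ : ℕ∞) F) (v : E) (p w : E) :
    fderiv ℝ (fun q => fderiv ℝ F q v) p w = fderiv ℝ (fderiv ℝ F) p w v := by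
  have h1 : ContDiff ℝ (⊤ : ℕ∞) (fderiv ℝ F) := hF.fderiv_right (by simp)
  have h2 : DifferentiableAt ℝ (fderiv ℝ F) p :=
    ((h1.differentiable (by simp)) p)
  have h3 : HasFDerivAt (fun q => fderiv ℝ F q v)
      ((ContinuousLinearMap.apply ℝ ℝ v).comp (fderiv ℝ (fderiv ℝ F) p)) p :=
    (ContinuousLinearMap.apply ℝ ℝ v).hasFDerivAt.comp p h2.hasFDerivAt
  rw [h3.fderiv]; rfl

/-- symmetry of second derivative -/
lemma sndDeriv_symm {F : E → ℝ} (hF : ContDiff ℝ (⊤ : ℕ∞) F) (p v w : E) :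
    fderiv ℝ (fderiv ℝ F) p v w = fderiv ℝ (fderiv ℝ F) p w v := by
  have h1 : ContDiff ℝ (⊤ : ℕ∞) (fderiv ℝ F) := hF.fderiv_right (by simp)
  exact second_derivative_symmetric
    (fun y => ((hF.differentiable (by simp)) y).hasFDerivAt)
    (((h1.differentiable (by simp)) p).hasFDerivAt) v w

end FDV

section decomp
variable {N : ℕ} {Y : Type*} [NormedAddCommGroup Y] [NormedSpace ℝ Y]

/-- basis vectors of `ℝ^N × ℝ` -/
noncomputable def bv {N : ℕ} (i : Fin N) : (Fin N → ℝ) × ℝ := (Pi.single i 1, 0)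
def sv {N : ℕ} : (Fin N → ℝ) × ℝ := (0, 1)

lemma vec_decomp (v : (Fin N → ℝ) × ℝ) :
    v = (∑ i, v.1 i • bv i) + v.2 • (sv : (Fin N → ℝ) × ℝ) := by
  have h1 : (∑ i, v.1 i • (bv i : (Fin N → ℝ) × ℝ))
      = ((∑ i, Pi.single i (v.1 i) : Fin N → ℝ), 0) := by
    rw [Prod.ext_iff]
    constructor
    · rw [Prod.fst_sum]
      refine Finset.sum_congr rfl (fun i _ => ?_)
      simp only [bv, Prod.smul_fst]
      rw [← Pi.single_smul]; simp
    · rw [Prod.snd_sum]; simp [bv]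
  rw [h1, Finset.univ_sum_single]
  ext
  · simp [sv]
  · simp [sv]

lemma clm_decomp (T : ((Fin N → ℝ) × ℝ) →L[ℝ] Y) (v : (Fin N → ℝ) × ℝ) :
    T v = (∑ i, v.1 i • T (bv i)) + v.2 • T sv := by
  conv_lhs => rw [vec_decomp v]
  rw [map_add, map_sum, map_smul]
  simp

lemma clm_ext_basis {T T' : ((Fin N → ℝ) × ℝ) →L[ℝ] Y}
    (h1 : ∀ i, T (bv i) = T' (bv i)) (h2 : T sv = T' sv) : T = T' := by
  apply ContinuousLinearMap.ext
  intro v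
  rw [clm_decomp T v, clm_decomp T' v]
  simp [h1, h2]

end decomp

section BF
variable {N : ℕ} (Λ : (Fin N → ℝ) → Fin N → Fin N → ℝ) (E : (Fin N → ℝ) → Fin N → ℝ)

/-- The bracket as a function of formal jet data. -/
noncomputable def Bf (q : (Fin N → ℝ) × ℝ) (φ : Fin N → ℝ) (t : ℝ)
    (ψ : Fin N → ℝ) (u : ℝ) : ℝ :=
  (q.2)⁻¹ * (∑ i, ∑ j, Λ q.1 i j * φ i * ψ j) + ∑ i, E q.1 i * (t * ψ i - φ i * u)

lemma B_eq_Bf (F G : (Fin N → ℝ) × ℝ → ℝ) (q : (Fin N → ℝ) × ℝ) :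
    poissonizationBracket Λ E F G q = Bf Λ E q (pdx F q) (pds F q) (pdx G q) (pds G q) := rfl

lemma Bf_addl (q : (Fin N → ℝ) × ℝ) (φ φ' ψ : Fin N → ℝ) (t t' u : ℝ) :
    Bf Λ E q (fun i => φ i + φ' i) (t + t') ψ u
      = Bf Λ E q φ t ψ u + Bf Λ E q φ' t' ψ u := by
  unfold Bf
  have h1 : (∑ i, ∑ j, Λ q.1 i j * (φ i + φ' i) * ψ j)
      = (∑ i, ∑ j, Λ q.1 i j * φ i * ψ j) + ∑ i, ∑ j, Λ q.1 i j * φ' i * ψ j := by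
    rw [← Finset.sum_add_distrib]
    refine Finset.sum_congr rfl fun i _ => ?_
    rw [← Finset.sum_add_distrib]
    exact Finset.sum_congr rfl fun j _ => by ring
  have h2 : (∑ i, E q.1 i * ((t + t') * ψ i - (φ i + φ' i) * u))
      = (∑ i, E q.1 i * (t * ψ i - φ i * u)) + ∑ i, E q.1 i * (t' * ψ i - φ' i * u) := by
    rw [← Finset.sum_add_distrib]
    exact Finset.sum_congr rfl fun i _ => by ring
  rw [h1, h2]; ring

lemma Bf_smull (q : (Fin N → ℝ) × ℝ) (c : ℝ) (φ ψ : Fin N → ℝ) (t u : ℝ) :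
    Bf Λ E q (fun i => c * φ i) (c * t) ψ u = c * Bf Λ E q φ t ψ u := by
  unfold Bf
  have h1 : (∑ i, ∑ j, Λ q.1 i j * (c * φ i) * ψ j)
      = c * ∑ i, ∑ j, Λ q.1 i j * φ i * ψ j := by
    rw [Finset.mul_sum]
    refine Finset.sum_congr rfl fun i _ => ?_
    rw [Finset.mul_sum]
    exact Finset.sum_congr rfl fun j _ => by ring
  have h2 : (∑ i, E q.1 i * (c * t * ψ i - c * φ i * u))
      = c * ∑ i, E q.1 i * (t * ψ i - φ i * u) := by
    rw [Finset.mul_sum]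
    exact Finset.sum_congr rfl fun i _ => by ring
  rw [h1, h2]; ring

lemma Bf_antisym (hΛ : ∀ (x : Fin N → ℝ) (i j : Fin N), Λ x i j = - Λ x j i)
    (q : (Fin N → ℝ) × ℝ) (φ ψ : Fin N → ℝ) (t u : ℝ) :
    Bf Λ E q φ t ψ u = - Bf Λ E q ψ u φ t := by
  unfold Bf
  have h1 : (∑ i, ∑ j, Λ q.1 i j * φ i * ψ j)
      = - ∑ i, ∑ j, Λ q.1 i j * ψ i * φ j := by
    rw [Finset.sum_comm, ← Finset.sum_neg_distrib]
    refine Finset.sum_congr rfl fun i _ => ?_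
    rw [← Finset.sum_neg_distrib]
    refine Finset.sum_congr rfl fun j _ => ?_
    rw [hΛ q.1 j i]; ring
  have h2 : (∑ i, E q.1 i * (t * ψ i - φ i * u))
      = - ∑ i, E q.1 i * (u * φ i - ψ i * t) := by
    rw [← Finset.sum_neg_distrib]
    exact Finset.sum_congr rfl fun i _ => by ring
  rw [h1, h2]; ring

lemma Bf_zerol (q : (Fin N → ℝ) × ℝ) (ψ : Fin N → ℝ) (u : ℝ) :
    Bf Λ E q (fun _ => 0) 0 ψ u = 0 := by
  unfold Bf; simp
end BF

section PB
variable {N : ℕ} (Λ : (Fin N → ℝ) → Fin N → Fin N → ℝ) (E : (Fin N → ℝ) → Fin N → ℝ)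

lemma pdx_fun_add {F₁ F₂ : (Fin N → ℝ) × ℝ → ℝ} {q : (Fin N → ℝ) × ℝ}
    (h1 : DifferentiableAt ℝ F₁ q) (h2 : DifferentiableAt ℝ F₂ q) :
    pdx (fun r => F₁ r + F₂ r) q = fun i => pdx F₁ q i + pdx F₂ q i :=
  funext fun i => fdv_add h1 h2 _

lemma pds_fun_add {F₁ F₂ : (Fin N → ℝ) × ℝ → ℝ} {q : (Fin N → ℝ) × ℝ}
    (h1 : DifferentiableAt ℝ F₁ q) (h2 : DifferentiableAt ℝ F₂ q) :
    pds (fun r => F₁ r + F₂ r) q = pds F₁ q + pds F₂ q := fdv_add h1 h2 _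

lemma pdx_fun_sub {F₁ F₂ : (Fin N → ℝ) × ℝ → ℝ} {q : (Fin N → ℝ) × ℝ}
    (h1 : DifferentiableAt ℝ F₁ q) (h2 : DifferentiableAt ℝ F₂ q) :
    pdx (fun r => F₁ r - F₂ r) q = fun i => pdx F₁ q i - pdx F₂ q i :=
  funext fun i => fdv_sub h1 h2 _

lemma pds_fun_sub {F₁ F₂ : (Fin N → ℝ) × ℝ → ℝ} {q : (Fin N → ℝ) × ℝ}
    (h1 : DifferentiableAt ℝ F₁ q) (h2 : DifferentiableAt ℝ F₂ q) :
    pds (fun r => F₁ r - F₂ r) q = pds F₁ q - pds F₂ q := fdv_sub h1 h2 _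

lemma pdx_fun_mul {u w : (Fin N → ℝ) × ℝ → ℝ} {q : (Fin N → ℝ) × ℝ}
    (h1 : DifferentiableAt ℝ u q) (h2 : DifferentiableAt ℝ w q) :
    pdx (fun r => u r * w r) q = fun i => u q * pdx w q i + w q * pdx u q i :=
  funext fun i => fdv_mul h1 h2 _

lemma pds_fun_mul {u w : (Fin N → ℝ) × ℝ → ℝ} {q : (Fin N → ℝ) × ℝ}
    (h1 : DifferentiableAt ℝ u q) (h2 : DifferentiableAt ℝ w q) :
    pds (fun r => u r * w r) q = u q * pds w q + w q * pds u q := fdv_mul h1 h2 _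

lemma B_antisym (hΛ : ∀ (x : Fin N → ℝ) (i j : Fin N), Λ x i j = - Λ x j i)
    (F G : (Fin N → ℝ) × ℝ → ℝ) (q : (Fin N → ℝ) × ℝ) :
    poissonizationBracket Λ E F G q = - poissonizationBracket Λ E G F q := by
  rw [B_eq_Bf, B_eq_Bf]; exact Bf_antisym Λ E hΛ q _ _ _ _

lemma B_add_fst {F₁ F₂ : (Fin N → ℝ) × ℝ → ℝ} (G : (Fin N → ℝ) × ℝ → ℝ)
    {q : (Fin N → ℝ) × ℝ}
    (h1 : DifferentiableAt ℝ F₁ q) (h2 : DifferentiableAt ℝ F₂ q) :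
    poissonizationBracket Λ E (fun r => F₁ r + F₂ r) G q
      = poissonizationBracket Λ E F₁ G q + poissonizationBracket Λ E F₂ G q := by
  rw [B_eq_Bf, B_eq_Bf, B_eq_Bf, pdx_fun_add h1 h2, pds_fun_add h1 h2]
  exact Bf_addl Λ E q _ _ _ _ _ _

lemma B_sub_fst {F₁ F₂ : (Fin N → ℝ) × ℝ → ℝ} (G : (Fin N → ℝ) × ℝ → ℝ)
    {q : (Fin N → ℝ) × ℝ}
    (h1 : DifferentiableAt ℝ F₁ q) (h2 : DifferentiableAt ℝ F₂ q) :
    poissonizationBracket Λ E (fun r => F₁ r - F₂ r) G q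
      = poissonizationBracket Λ E F₁ G q - poissonizationBracket Λ E F₂ G q := by
  have hh : poissonizationBracket Λ E (fun r => F₂ r + (F₁ r - F₂ r)) G q
      = poissonizationBracket Λ E F₂ G q
        + poissonizationBracket Λ E (fun r => F₁ r - F₂ r) G q :=
    B_add_fst Λ E G h2 (h1.sub h2)
  have he : (fun r => F₂ r + (F₁ r - F₂ r)) = F₁ := by funext r; ring
  rw [he] at hh; linarith

lemma B_mul_fst {u w : (Fin N → ℝ) × ℝ → ℝ} (G : (Fin N → ℝ) × ℝ → ℝ)
    {q : (Fin N → ℝ) × ℝ}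
    (h1 : DifferentiableAt ℝ u q) (h2 : DifferentiableAt ℝ w q) :
    poissonizationBracket Λ E (fun r => u r * w r) G q
      = u q * poissonizationBracket Λ E w G q
        + w q * poissonizationBracket Λ E u G q := by
  rw [B_eq_Bf, B_eq_Bf, B_eq_Bf, pdx_fun_mul h1 h2, pds_fun_mul h1 h2,
    Bf_addl Λ E q (fun i => u q * pdx w q i) (fun i => w q * pdx u q i) _
      (u q * pds w q) (w q * pds u q) _,
    Bf_smull, Bf_smull]

lemma B_add_snd (hΛ : ∀ (x : Fin N → ℝ) (i j : Fin N), Λ x i j = - Λ x j i) (F : (Fin N → ℝ) × ℝ → ℝ) {G₁ G₂ : (Fin N → ℝ) × ℝ → ℝ}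
    {q : (Fin N → ℝ) × ℝ}
    (h1 : DifferentiableAt ℝ G₁ q) (h2 : DifferentiableAt ℝ G₂ q) :
    poissonizationBracket Λ E F (fun r => G₁ r + G₂ r) q
      = poissonizationBracket Λ E F G₁ q + poissonizationBracket Λ E F G₂ q := by
  rw [B_antisym Λ E hΛ, B_add_fst Λ E F h1 h2, B_antisym Λ E hΛ G₁,
    B_antisym Λ E hΛ G₂]
  ring

lemma B_sub_snd (hΛ : ∀ (x : Fin N → ℝ) (i j : Fin N), Λ x i j = - Λ x j i) (F : (Fin N → ℝ) × ℝ → ℝ) {G₁ G₂ : (Fin N → ℝ) × ℝ → ℝ}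
    {q : (Fin N → ℝ) × ℝ}
    (h1 : DifferentiableAt ℝ G₁ q) (h2 : DifferentiableAt ℝ G₂ q) :
    poissonizationBracket Λ E F (fun r => G₁ r - G₂ r) q
      = poissonizationBracket Λ E F G₁ q - poissonizationBracket Λ E F G₂ q := by
  rw [B_antisym Λ E hΛ, B_sub_fst Λ E F h1 h2, B_antisym Λ E hΛ G₁,
    B_antisym Λ E hΛ G₂]
  ring

lemma B_mul_snd (hΛ : ∀ (x : Fin N → ℝ) (i j : Fin N), Λ x i j = - Λ x j i) (F : (Fin N → ℝ) × ℝ → ℝ) {u w : (Fin N → ℝ) × ℝ → ℝ}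
    {q : (Fin N → ℝ) × ℝ}
    (h1 : DifferentiableAt ℝ u q) (h2 : DifferentiableAt ℝ w q) :
    poissonizationBracket Λ E F (fun r => u r * w r) q
      = u q * poissonizationBracket Λ E F w q
        + w q * poissonizationBracket Λ E F u q := by
  rw [B_antisym Λ E hΛ, B_mul_fst Λ E F h1 h2, B_antisym Λ E hΛ w,
    B_antisym Λ E hΛ u]
  ring

lemma B_congr_fst {F F' : (Fin N → ℝ) × ℝ → ℝ} (G : (Fin N → ℝ) × ℝ → ℝ)
    {q : (Fin N → ℝ) × ℝ} (h : fderiv ℝ F q = fderiv ℝ F' q) :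
    poissonizationBracket Λ E F G q = poissonizationBracket Λ E F' G q := by
  rw [B_eq_Bf, B_eq_Bf]
  have h1 : pdx F q = pdx F' q := funext fun i => by unfold pdx; rw [h]
  have h2 : pds F q = pds F' q := by unfold pds; rw [h]
  rw [h1, h2]

lemma B_congr_snd (F : (Fin N → ℝ) × ℝ → ℝ) {G G' : (Fin N → ℝ) × ℝ → ℝ}
    {q : (Fin N → ℝ) × ℝ} (h : fderiv ℝ G q = fderiv ℝ G' q) :
    poissonizationBracket Λ E F G q = poissonizationBracket Λ E F G' q := by
  rw [B_eq_Bf, B_eq_Bf]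
  have h1 : pdx G q = pdx G' q := funext fun i => by unfold pdx; rw [h]
  have h2 : pds G q = pds G' q := by unfold pds; rw [h]
  rw [h1, h2]

lemma B_diffAt (hΛs : ∀ i j : Fin N, ContDiff ℝ (⊤ : ℕ∞) (fun x => Λ x i j))
    (hEs : ∀ i : Fin N, ContDiff ℝ (⊤ : ℕ∞) (fun x => E x i)) {F G : (Fin N → ℝ) × ℝ → ℝ} {q : (Fin N → ℝ) × ℝ}
    (hq : q.2 ≠ 0) (hF : ContDiff ℝ (⊤ : ℕ∞) F) (hG : ContDiff ℝ (⊤ : ℕ∞) G) :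
    DifferentiableAt ℝ (poissonizationBracket Λ E F G) q := by
  have hdF : ∀ v, DifferentiableAt ℝ (fun r => fderiv ℝ F r v) q :=
    fun v => diffAt_fdv hF v q
  have hdG : ∀ v, DifferentiableAt ℝ (fun r => fderiv ℝ G r v) q :=
    fun v => diffAt_fdv hG v q
  have hΛd : ∀ i j, DifferentiableAt ℝ (fun r : (Fin N → ℝ) × ℝ => Λ r.1 i j) q :=
    fun i j => (((hΛs i j).comp contDiff_fst).differentiable (by simp)).differentiableAt
  have hEd : ∀ i, DifferentiableAt ℝ (fun r : (Fin N → ℝ) × ℝ => E r.1 i) q :=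
    fun i => (((hEs i).comp contDiff_fst).differentiable (by simp)).differentiableAt
  unfold poissonizationBracket pdx pds
  apply DifferentiableAt.add
  · apply DifferentiableAt.mul
    · exact (differentiable_snd.differentiableAt).inv hq
    · exact DifferentiableAt.fun_sum fun i _ => DifferentiableAt.fun_sum fun j _ =>
        ((hΛd i j).mul (hdF _)).mul (hdG _)
  · exact DifferentiableAt.fun_sum fun i _ =>
      (hEd i).mul (((hdF _).mul (hdG _)).sub ((hdF _).mul (hdG _)))

end PB

section ZeroJet
variable {E' : Type*} [NormedAddCommGroup E'] [NormedSpace ℝ E']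

lemma hasFDerivAt_fdv {F : E' → ℝ} (hF : ContDiff ℝ (⊤ : ℕ∞) F) (v p : E') :
    HasFDerivAt (fun q => fderiv ℝ F q v)
      ((ContinuousLinearMap.apply ℝ ℝ v).comp (fderiv ℝ (fderiv ℝ F) p)) p := by
  have h1 : ContDiff ℝ (⊤ : ℕ∞) (fderiv ℝ F) := hF.fderiv_right (by simp)
  have h2 : DifferentiableAt ℝ (fderiv ℝ F) p := (h1.differentiable (by simp)) p
  exact (ContinuousLinearMap.apply ℝ ℝ v).hasFDerivAt.comp p h2.hasFDerivAt

lemma mul_zerojet_r {u w : E' → ℝ} {p : E'} (hu : DifferentiableAt ℝ u p)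
    (hw0 : w p = 0) (hw : HasFDerivAt w (0 : E' →L[ℝ] ℝ) p) :
    HasFDerivAt (fun q => u q * w q) (0 : E' →L[ℝ] ℝ) p := by
  have := hu.hasFDerivAt.mul hw
  simp only [hw0, zero_smul, smul_zero, add_zero] at this; exact this

lemma mul_zerojet_l {u w : E' → ℝ} {p : E'} (hw0 : w p = 0) (hw : HasFDerivAt w (0 : E' →L[ℝ] ℝ) p)
    (hu : DifferentiableAt ℝ u p) :
    HasFDerivAt (fun q => w q * u q) (0 : E' →L[ℝ] ℝ) p := by
  have := hw.mul hu.hasFDerivAt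
  simp only [hw0, zero_smul, smul_zero, add_zero] at this; exact this
end ZeroJet

section KeyLemma
variable {N : ℕ} (Λ : (Fin N → ℝ) → Fin N → Fin N → ℝ) (E : (Fin N → ℝ) → Fin N → ℝ)

lemma B_zero_jet (hΛs : ∀ i j : Fin N, ContDiff ℝ (⊤ : ℕ∞) (fun x => Λ x i j))
    (hEs : ∀ i : Fin N, ContDiff ℝ (⊤ : ℕ∞) (fun x => E x i))
    {G₀ H : (Fin N → ℝ) × ℝ → ℝ} {p : (Fin N → ℝ) × ℝ} (hp : p.2 ≠ 0)
    (hG₀ : ContDiff ℝ (⊤ : ℕ∞) G₀) (hH : ContDiff ℝ (⊤ : ℕ∞) H)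
    (h1 : fderiv ℝ G₀ p = 0) (h2 : fderiv ℝ (fderiv ℝ G₀) p = 0) :
    HasFDerivAt (poissonizationBracket Λ E G₀ H) (0 : ((Fin N → ℝ) × ℝ) →L[ℝ] ℝ) p := by
  have hjw : ∀ v, HasFDerivAt (fun q => fderiv ℝ G₀ q v) (0 : ((Fin N → ℝ) × ℝ) →L[ℝ] ℝ) p := by
    intro v
    have h := hasFDerivAt_fdv hG₀ v p
    rw [h2, ContinuousLinearMap.comp_zero] at h
    exact h
  have hjwx : ∀ i, HasFDerivAt (fun q => pdx G₀ q i) (0 : ((Fin N → ℝ) × ℝ) →L[ℝ] ℝ) p :=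
    fun i => hjw (Pi.single i 1, 0)
  have hjws : HasFDerivAt (fun q => pds G₀ q) (0 : ((Fin N → ℝ) × ℝ) →L[ℝ] ℝ) p :=
    hjw (0, 1)
  have hjwx0 : ∀ i, pdx G₀ p i = 0 := fun i => by unfold pdx; rw [h1]; rfl
  have hjws0 : pds G₀ p = 0 := by unfold pds; rw [h1]; rfl
  have hdHx : ∀ i, DifferentiableAt ℝ (fun r => pdx H r i) p :=
    fun i => diffAt_fdv hH (Pi.single i 1, 0) p
  have hdHs : DifferentiableAt ℝ (fun r => pds H r) p := diffAt_fdv hH (0, 1) p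
  have hΛd : ∀ i j, DifferentiableAt ℝ (fun r : (Fin N → ℝ) × ℝ => Λ r.1 i j) p :=
    fun i j => (((hΛs i j).comp contDiff_fst).differentiable (by simp)).differentiableAt
  have hEd : ∀ i, DifferentiableAt ℝ (fun r : (Fin N → ℝ) × ℝ => E r.1 i) p :=
    fun i => (((hEs i).comp contDiff_fst).differentiable (by simp)).differentiableAt
  -- the Λ-part
  have hS : HasFDerivAt (fun q : (Fin N → ℝ) × ℝ =>
      ∑ i, ∑ j, Λ q.1 i j * pdx G₀ q i * pdx H q j) (0 : ((Fin N → ℝ) × ℝ) →L[ℝ] ℝ) p := by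
    have h := HasFDerivAt.fun_sum (u := Finset.univ)
      (A := fun (i : Fin N) q => ∑ j, Λ q.1 i j * pdx G₀ q i * pdx H q j)
      (A' := fun _ => (0 : ((Fin N → ℝ) × ℝ) →L[ℝ] ℝ)) (x := p) ?_
    · simpa using h
    · intro i _
      show HasFDerivAt (fun q : (Fin N → ℝ) × ℝ =>
        ∑ j, Λ q.1 i j * pdx G₀ q i * pdx H q j) (0 : ((Fin N → ℝ) × ℝ) →L[ℝ] ℝ) p
      have h := HasFDerivAt.fun_sum (u := Finset.univ)
        (A := fun (j : Fin N) q => Λ q.1 i j * pdx G₀ q i * pdx H q j)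
        (A' := fun _ => (0 : ((Fin N → ℝ) × ℝ) →L[ℝ] ℝ)) (x := p) ?_
      · simpa using h
      · intro j _
        show HasFDerivAt (fun q : (Fin N → ℝ) × ℝ =>
          Λ q.1 i j * pdx G₀ q i * pdx H q j) (0 : ((Fin N → ℝ) × ℝ) →L[ℝ] ℝ) p
        have heq : (fun q : (Fin N → ℝ) × ℝ => Λ q.1 i j * pdx G₀ q i * pdx H q j)
            = fun q => (Λ q.1 i j * pdx H q j) * pdx G₀ q i := by
          funext q; ring
        rw [heq]
        exact mul_zerojet_r ((hΛd i j).mul (hdHx _)) (hjwx0 _) (hjwx _)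
  have hS0 : (∑ i, ∑ j, Λ p.1 i j * pdx G₀ p i * pdx H p j) = 0 := by
    simp [hjwx0]
  have hfirst : HasFDerivAt (fun q : (Fin N → ℝ) × ℝ =>
      (q.2)⁻¹ * ∑ i, ∑ j, Λ q.1 i j * pdx G₀ q i * pdx H q j)
      (0 : ((Fin N → ℝ) × ℝ) →L[ℝ] ℝ) p :=
    mul_zerojet_r ((differentiable_snd.differentiableAt).inv hp) hS0 hS
  -- the E-part
  have hsnd : HasFDerivAt (fun q : (Fin N → ℝ) × ℝ =>
      ∑ i, E q.1 i * (pds G₀ q * pdx H q i - pdx G₀ q i * pds H q))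
      (0 : ((Fin N → ℝ) × ℝ) →L[ℝ] ℝ) p := by
    have h := HasFDerivAt.fun_sum (u := Finset.univ)
      (A := fun (i : Fin N) q => E q.1 i * (pds G₀ q * pdx H q i - pdx G₀ q i * pds H q))
      (A' := fun _ => (0 : ((Fin N → ℝ) × ℝ) →L[ℝ] ℝ)) (x := p) ?_
    · simpa using h
    · intro i _
      show HasFDerivAt (fun q : (Fin N → ℝ) × ℝ =>
        E q.1 i * (pds G₀ q * pdx H q i - pdx G₀ q i * pds H q))
        (0 : ((Fin N → ℝ) × ℝ) →L[ℝ] ℝ) p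
      have hX : HasFDerivAt (fun q : (Fin N → ℝ) × ℝ =>
          pds G₀ q * pdx H q i - pdx G₀ q i * pds H q)
          (0 : ((Fin N → ℝ) × ℝ) →L[ℝ] ℝ) p := by
        have ha := mul_zerojet_l (u := fun q => pdx H q i) (w := fun q => pds G₀ q) (p := p) hjws0 hjws (hdHx i)
        have hb := mul_zerojet_l (u := fun q => pds H q) (w := fun q => pdx G₀ q i) (p := p) (hjwx0 i) (hjwx i) hdHs
        simpa using ha.fun_sub hb
      have hX0 : pds G₀ p * pdx H p i - pdx G₀ p i * pds H p = 0 := by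
        simp [hjwx0, hjws0]
      exact mul_zerojet_r (hEd i) hX0 hX
  have := hfirst.fun_add hsnd
  rw [add_zero] at this; exact this

lemma B_zero_val {G₀ H : (Fin N → ℝ) × ℝ → ℝ} {p : (Fin N → ℝ) × ℝ}
    (h1 : fderiv ℝ G₀ p = 0) :
    poissonizationBracket Λ E G₀ H p = 0 := by
  rw [B_eq_Bf]
  have ha : pdx G₀ p = fun _ => 0 := funext fun i => by unfold pdx; rw [h1]; rfl
  have hb : pds G₀ p = 0 := by unfold pds; rw [h1]; rfl
  rw [ha, hb]
  exact Bf_zerol Λ E p _ _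

end KeyLemma

section JC
variable {N : ℕ} (Λ : (Fin N → ℝ) → Fin N → Fin N → ℝ) (E : (Fin N → ℝ) → Fin N → ℝ)

/-- The Jacobiator of the Poissonization bracket. -/
noncomputable def Jc (F G H : (Fin N → ℝ) × ℝ → ℝ) (p : (Fin N → ℝ) × ℝ) : ℝ :=
  poissonizationBracket Λ E F (poissonizationBracket Λ E G H) p
    + poissonizationBracket Λ E G (poissonizationBracket Λ E H F) p
    + poissonizationBracket Λ E H (poissonizationBracket Λ E F G) p

lemma Jc_cyc (F G H : (Fin N → ℝ) × ℝ → ℝ) (p : (Fin N → ℝ) × ℝ) :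
    Jc Λ E F G H p = Jc Λ E G H F p := by
  unfold Jc; ring

variable (hΛ : ∀ (x : Fin N → ℝ) (i j : Fin N), Λ x i j = - Λ x j i)
variable (hΛs : ∀ i j : Fin N, ContDiff ℝ (⊤ : ℕ∞) (fun x => Λ x i j))
variable (hEs : ∀ i : Fin N, ContDiff ℝ (⊤ : ℕ∞) (fun x => E x i))

lemma Jc_congr₃
    (hΛ : ∀ (x : Fin N → ℝ) (i j : Fin N), Λ x i j = - Λ x j i)
    (hΛs : ∀ i j : Fin N, ContDiff ℝ (⊤ : ℕ∞) (fun x => Λ x i j))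
    (hEs : ∀ i : Fin N, ContDiff ℝ (⊤ : ℕ∞) (fun x => E x i))
    {F G H H' : (Fin N → ℝ) × ℝ → ℝ} {p : (Fin N → ℝ) × ℝ} (hp : p.2 ≠ 0)
    (hF : ContDiff ℝ (⊤ : ℕ∞) F) (hG : ContDiff ℝ (⊤ : ℕ∞) G)
    (hH : ContDiff ℝ (⊤ : ℕ∞) H) (hH' : ContDiff ℝ (⊤ : ℕ∞) H')
    (j1 : fderiv ℝ H p = fderiv ℝ H' p)
    (j2 : fderiv ℝ (fderiv ℝ H) p = fderiv ℝ (fderiv ℝ H') p) :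
    Jc Λ E F G H p = Jc Λ E F G H' p := by
  have dH : ∀ q, DifferentiableAt ℝ H q := fun q => (hH.differentiable (by simp)).differentiableAt
  have dH' : ∀ q, DifferentiableAt ℝ H' q := fun q => (hH'.differentiable (by simp)).differentiableAt
  have hH₀ : ContDiff ℝ (⊤ : ℕ∞) (fun r => H r - H' r) := hH.sub hH'
  have hz1 : fderiv ℝ (fun r => H r - H' r) p = 0 := by
    rw [fderiv_fun_sub (dH p) (dH' p), j1]; simp
  have hz2 : fderiv ℝ (fderiv ℝ (fun r => H r - H' r)) p = 0 := by
    have hfun : fderiv ℝ (fun r => H r - H' r) = fun q => fderiv ℝ H q - fderiv ℝ H' q :=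
      funext fun q => fderiv_fun_sub (dH q) (dH' q)
    have d1 : DifferentiableAt ℝ (fderiv ℝ H) p :=
      (((hH.fderiv_right (m := (⊤ : ℕ∞)) (by simp)).differentiable (by simp)) p)
    have d2 : DifferentiableAt ℝ (fderiv ℝ H') p :=
      (((hH'.fderiv_right (m := (⊤ : ℕ∞)) (by simp)).differentiable (by simp)) p)
    rw [hfun, fderiv_fun_sub d1 d2, j2]; simp
  -- term 3
  have t3 : poissonizationBracket Λ E H (poissonizationBracket Λ E F G) p
      = poissonizationBracket Λ E H' (poissonizationBracket Λ E F G) p :=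
    B_congr_fst Λ E _ j1
  -- zero-jet derivatives
  have key1 : fderiv ℝ (poissonizationBracket Λ E (fun r => H r - H' r) F) p = 0 :=
    (B_zero_jet Λ E hΛs hEs hp hH₀ hF hz1 hz2).fderiv
  have key2 : fderiv ℝ (poissonizationBracket Λ E G (fun r => H r - H' r)) p = 0 := by
    have hanti : poissonizationBracket Λ E G (fun r => H r - H' r)
        = fun q => -(poissonizationBracket Λ E (fun r => H r - H' r) G q) :=
      funext fun q => B_antisym Λ E hΛ _ _ q
    rw [hanti, fderiv_fun_neg, (B_zero_jet Λ E hΛs hEs hp hH₀ hG hz1 hz2).fderiv]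
    simp
  -- term 1
  have t1 : poissonizationBracket Λ E F (poissonizationBracket Λ E G H) p
      = poissonizationBracket Λ E F (poissonizationBracket Λ E G H') p := by
    have hsplit : poissonizationBracket Λ E G H
        = fun q => poissonizationBracket Λ E G H' q
            + poissonizationBracket Λ E G (fun r => H r - H' r) q := by
      funext q
      have := B_sub_snd Λ E hΛ G (dH q) (dH' q)
      linarith
    have hjets : fderiv ℝ (poissonizationBracket Λ E G H) p
        = fderiv ℝ (poissonizationBracket Λ E G H') p := by
      rw [hsplit, fderiv_fun_add (B_diffAt Λ E hΛs hEs hp hG hH')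
        (B_diffAt Λ E hΛs hEs hp hG hH₀), key2]
      simp
    exact B_congr_snd Λ E F hjets
  -- term 2
  have t2 : poissonizationBracket Λ E G (poissonizationBracket Λ E H F) p
      = poissonizationBracket Λ E G (poissonizationBracket Λ E H' F) p := by
    have hsplit : poissonizationBracket Λ E H F
        = fun q => poissonizationBracket Λ E H' F q
            + poissonizationBracket Λ E (fun r => H r - H' r) F q := by
      funext q
      have := B_sub_fst Λ E F (dH q) (dH' q)
      linarith
    have hjets : fderiv ℝ (poissonizationBracket Λ E H F) p
        = fderiv ℝ (poissonizationBracket Λ E H' F) p := by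
      rw [hsplit, fderiv_fun_add (B_diffAt Λ E hΛs hEs hp hH' hF)
        (B_diffAt Λ E hΛs hEs hp hH₀ hF), key1]
      simp
    exact B_congr_snd Λ E G hjets
  unfold Jc
  rw [t1, t2, t3]

lemma Jc_congr_all
    (hΛ : ∀ (x : Fin N → ℝ) (i j : Fin N), Λ x i j = - Λ x j i)
    (hΛs : ∀ i j : Fin N, ContDiff ℝ (⊤ : ℕ∞) (fun x => Λ x i j))
    (hEs : ∀ i : Fin N, ContDiff ℝ (⊤ : ℕ∞) (fun x => E x i))
    {F G H F' G' H' : (Fin N → ℝ) × ℝ → ℝ} {p : (Fin N → ℝ) × ℝ} (hp : p.2 ≠ 0)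
    (hF : ContDiff ℝ (⊤ : ℕ∞) F) (hG : ContDiff ℝ (⊤ : ℕ∞) G) (hH : ContDiff ℝ (⊤ : ℕ∞) H)
    (hF' : ContDiff ℝ (⊤ : ℕ∞) F') (hG' : ContDiff ℝ (⊤ : ℕ∞) G') (hH' : ContDiff ℝ (⊤ : ℕ∞) H')
    (jF1 : fderiv ℝ F p = fderiv ℝ F' p)
    (jF2 : fderiv ℝ (fderiv ℝ F) p = fderiv ℝ (fderiv ℝ F') p)
    (jG1 : fderiv ℝ G p = fderiv ℝ G' p)
    (jG2 : fderiv ℝ (fderiv ℝ G) p = fderiv ℝ (fderiv ℝ G') p)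
    (jH1 : fderiv ℝ H p = fderiv ℝ H' p)
    (jH2 : fderiv ℝ (fderiv ℝ H) p = fderiv ℝ (fderiv ℝ H') p) :
    Jc Λ E F G H p = Jc Λ E F' G' H' p := by
  have s1 : Jc Λ E F G H p = Jc Λ E F G H' p :=
    Jc_congr₃ Λ E hΛ hΛs hEs hp hF hG hH hH' jH1 jH2
  have s2 : Jc Λ E F G H' p = Jc Λ E F' G H' p := by
    rw [Jc_cyc Λ E F G H', Jc_cyc Λ E F' G H']
    exact Jc_congr₃ Λ E hΛ hΛs hEs hp hG hH' hF hF' jF1 jF2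
  have s3 : Jc Λ E F' G H' p = Jc Λ E F' G' H' p := by
    rw [show Jc Λ E F' G H' p = Jc Λ E H' F' G p from by
          rw [Jc_cyc Λ E F' G H', Jc_cyc Λ E G H' F'],
        show Jc Λ E F' G' H' p = Jc Λ E H' F' G' p from by
          rw [Jc_cyc Λ E F' G' H', Jc_cyc Λ E G' H' F']]
    exact Jc_congr₃ Λ E hΛ hΛs hEs hp hH' hF' hG hG' jG1 jG2
  rw [s1, s2, s3]
end JC

section VF
variable {N : ℕ} (Λ : (Fin N → ℝ) → Fin N → Fin N → ℝ) (E : (Fin N → ℝ) → Fin N → ℝ)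

/-- The degree-one homogeneous lift of a function on the base. -/
noncomputable def vf {N : ℕ} (f : (Fin N → ℝ) → ℝ) : (Fin N → ℝ) × ℝ → ℝ :=
  fun q => q.2 * f q.1

lemma vf_contDiff {f : (Fin N → ℝ) → ℝ} (hf : ContDiff ℝ (⊤ : ℕ∞) f) :
    ContDiff ℝ (⊤ : ℕ∞) (vf f) :=
  contDiff_snd.mul (hf.comp contDiff_fst)

lemma fdv_comp_fst {f : (Fin N → ℝ) → ℝ} {q : (Fin N → ℝ) × ℝ}
    (hf : DifferentiableAt ℝ f q.1) (v : (Fin N → ℝ) × ℝ) :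
    fderiv ℝ (fun r : (Fin N → ℝ) × ℝ => f r.1) q v = fderiv ℝ f q.1 v.1 := by
  have h : HasFDerivAt (fun r : (Fin N → ℝ) × ℝ => f r.1)
      ((fderiv ℝ f q.1).comp (ContinuousLinearMap.fst ℝ (Fin N → ℝ) ℝ)) q :=
    hf.hasFDerivAt.comp q hasFDerivAt_fst
  rw [h.fderiv]; rfl

lemma fdv_snd {q : (Fin N → ℝ) × ℝ} (v : (Fin N → ℝ) × ℝ) :
    fderiv ℝ (fun r : (Fin N → ℝ) × ℝ => r.2) q v = v.2 := by
  rw [hasFDerivAt_snd.fderiv]; rfl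

lemma fdv_vf {f : (Fin N → ℝ) → ℝ} (hf : ContDiff ℝ (⊤ : ℕ∞) f) (q v : (Fin N → ℝ) × ℝ) :
    fderiv ℝ (vf f) q v = q.2 * fderiv ℝ f q.1 v.1 + f q.1 * v.2 := by
  have h1 : DifferentiableAt ℝ (fun r : (Fin N → ℝ) × ℝ => r.2) q :=
    differentiable_snd.differentiableAt
  have hfd : DifferentiableAt ℝ f q.1 := (hf.differentiable (by simp)).differentiableAt
  have h2 : DifferentiableAt ℝ (fun r : (Fin N → ℝ) × ℝ => f r.1) q :=
    hfd.comp q differentiable_fst.differentiableAt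
  unfold vf
  rw [fdv_mul h1 h2, fdv_comp_fst hfd, fdv_snd]

lemma pdx_vf {f : (Fin N → ℝ) → ℝ} (hf : ContDiff ℝ (⊤ : ℕ∞) f) (q : (Fin N → ℝ) × ℝ)
    (i : Fin N) : pdx (vf f) q i = q.2 * pd f q.1 i := by
  unfold pdx pd
  rw [fdv_vf hf]
  simp

lemma pds_vf {f : (Fin N → ℝ) → ℝ} (hf : ContDiff ℝ (⊤ : ℕ∞) f) (q : (Fin N → ℝ) × ℝ) :
    pds (vf f) q = f q.1 := by
  unfold pds
  rw [fdv_vf hf]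
  simp

lemma jacobi_contDiff
    (hΛs : ∀ i j : Fin N, ContDiff ℝ (⊤ : ℕ∞) (fun x => Λ x i j))
    (hEs : ∀ i : Fin N, ContDiff ℝ (⊤ : ℕ∞) (fun x => E x i))
    {f g : (Fin N → ℝ) → ℝ} (hf : ContDiff ℝ (⊤ : ℕ∞) f) (hg : ContDiff ℝ (⊤ : ℕ∞) g) :
    ContDiff ℝ (⊤ : ℕ∞) (jacobiBracket Λ E f g) := by
  unfold jacobiBracket pd
  apply ContDiff.sub
  · apply ContDiff.add
    · exact ContDiff.sum fun i _ => ContDiff.sum fun j _ =>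
        ((hΛs i j).mul (contDiff_fdv hf _)).mul (contDiff_fdv hg _)
    · exact hf.mul (ContDiff.sum fun i _ => (hEs i).mul (contDiff_fdv hg _))
  · exact hg.mul (ContDiff.sum fun i _ => (hEs i).mul (contDiff_fdv hf _))

lemma B_vf {f g : (Fin N → ℝ) → ℝ} (hf : ContDiff ℝ (⊤ : ℕ∞) f) (hg : ContDiff ℝ (⊤ : ℕ∞) g) :
    poissonizationBracket Λ E (vf f) (vf g) = vf (jacobiBracket Λ E f g) := by
  funext q
  rw [B_eq_Bf]
  have hφ : pdx (vf f) q = fun i => q.2 * pd f q.1 i := funext fun i => pdx_vf hf q i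
  have hψ : pdx (vf g) q = fun i => q.2 * pd g q.1 i := funext fun i => pdx_vf hg q i
  rw [hφ, hψ, pds_vf hf, pds_vf hg]
  unfold Bf vf jacobiBracket
  have h1 : (∑ i, ∑ j, Λ q.1 i j * (q.2 * pd f q.1 i) * (q.2 * pd g q.1 j))
      = q.2 ^ 2 * ∑ i, ∑ j, Λ q.1 i j * pd f q.1 i * pd g q.1 j := by
    rw [Finset.mul_sum]
    refine Finset.sum_congr rfl fun i _ => ?_
    rw [Finset.mul_sum]
    exact Finset.sum_congr rfl fun j _ => by ring
  have h2 : (∑ i, E q.1 i * (f q.1 * (q.2 * pd g q.1 i) - q.2 * pd f q.1 i * g q.1))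
      = q.2 * (f q.1 * (∑ i, E q.1 i * pd g q.1 i)
          - g q.1 * (∑ i, E q.1 i * pd f q.1 i)) := by
    rw [show (f q.1 * (∑ i, E q.1 i * pd g q.1 i))
          = ∑ i, f q.1 * (E q.1 i * pd g q.1 i) from Finset.mul_sum _ _ _,
      show (g q.1 * (∑ i, E q.1 i * pd f q.1 i))
          = ∑ i, g q.1 * (E q.1 i * pd f q.1 i) from Finset.mul_sum _ _ _,
      mul_sub, Finset.mul_sum, Finset.mul_sum, ← Finset.sum_sub_distrib]
    exact Finset.sum_congr rfl fun i _ => by ring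
  rw [h1, h2]
  rcases eq_or_ne q.2 0 with h0 | h0
  · rw [h0]; simp
  · rw [show (q.2)⁻¹ * (q.2 ^ 2 * ∑ i, ∑ j, Λ q.1 i j * pd f q.1 i * pd g q.1 j)
        = q.2 * ∑ i, ∑ j, Λ q.1 i j * pd f q.1 i * pd g q.1 j from by
      field_simp]
    ring
end VF

section DERIV
variable {N : ℕ} (Λ : (Fin N → ℝ) → Fin N → Fin N → ℝ) (E : (Fin N → ℝ) → Fin N → ℝ)

lemma Jc_deriv₃
    (hΛ : ∀ (x : Fin N → ℝ) (i j : Fin N), Λ x i j = - Λ x j i)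
    (hΛs : ∀ i j : Fin N, ContDiff ℝ (⊤ : ℕ∞) (fun x => Λ x i j))
    (hEs : ∀ i : Fin N, ContDiff ℝ (⊤ : ℕ∞) (fun x => E x i))
    {A B' u w : (Fin N → ℝ) × ℝ → ℝ} {p : (Fin N → ℝ) × ℝ} (hp : p.2 ≠ 0)
    (hA : ContDiff ℝ (⊤ : ℕ∞) A) (hB : ContDiff ℝ (⊤ : ℕ∞) B')
    (hu : ContDiff ℝ (⊤ : ℕ∞) u) (hw : ContDiff ℝ (⊤ : ℕ∞) w) :
    Jc Λ E A B' (fun q => u q * w q) p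
      = u p * Jc Λ E A B' w p + w p * Jc Λ E A B' u p := by
  have du : ∀ q, DifferentiableAt ℝ u q := fun q => (hu.differentiable (by simp)).differentiableAt
  have dw : ∀ q, DifferentiableAt ℝ w q := fun q => (hw.differentiable (by simp)).differentiableAt
  have dBw : DifferentiableAt ℝ (poissonizationBracket Λ E B' w) p :=
    B_diffAt Λ E hΛs hEs hp hB hw
  have dBu : DifferentiableAt ℝ (poissonizationBracket Λ E B' u) p :=
    B_diffAt Λ E hΛs hEs hp hB hu
  have dwA : DifferentiableAt ℝ (poissonizationBracket Λ E w A) p :=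
    B_diffAt Λ E hΛs hEs hp hw hA
  have duA : DifferentiableAt ℝ (poissonizationBracket Λ E u A) p :=
    B_diffAt Λ E hΛs hEs hp hu hA
  have h1 : poissonizationBracket Λ E B' (fun r => u r * w r)
      = fun q => u q * poissonizationBracket Λ E B' w q
          + w q * poissonizationBracket Λ E B' u q :=
    funext fun q => B_mul_snd Λ E hΛ B' (du q) (dw q)
  have h2 : poissonizationBracket Λ E (fun r => u r * w r) A
      = fun q => u q * poissonizationBracket Λ E w A q
          + w q * poissonizationBracket Λ E u A q :=
    funext fun q => B_mul_fst Λ E A (du q) (dw q)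
  have e1 : poissonizationBracket Λ E A (poissonizationBracket Λ E B' (fun r => u r * w r)) p
      = (u p * poissonizationBracket Λ E A (poissonizationBracket Λ E B' w) p
          + poissonizationBracket Λ E B' w p * poissonizationBracket Λ E A u p)
        + (w p * poissonizationBracket Λ E A (poissonizationBracket Λ E B' u) p
          + poissonizationBracket Λ E B' u p * poissonizationBracket Λ E A w p) := by
    rw [h1, B_add_snd Λ E hΛ A ((du p).fun_mul dBw) ((dw p).fun_mul dBu),
      B_mul_snd Λ E hΛ A (du p) dBw, B_mul_snd Λ E hΛ A (dw p) dBu]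
  have e2 : poissonizationBracket Λ E B'
        (poissonizationBracket Λ E (fun r => u r * w r) A) p
      = (u p * poissonizationBracket Λ E B' (poissonizationBracket Λ E w A) p
          + poissonizationBracket Λ E w A p * poissonizationBracket Λ E B' u p)
        + (w p * poissonizationBracket Λ E B' (poissonizationBracket Λ E u A) p
          + poissonizationBracket Λ E u A p * poissonizationBracket Λ E B' w p) := by
    rw [h2, B_add_snd Λ E hΛ B' ((du p).fun_mul dwA) ((dw p).fun_mul duA),
      B_mul_snd Λ E hΛ B' (du p) dwA, B_mul_snd Λ E hΛ B' (dw p) duA]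
  have e3 : poissonizationBracket Λ E (fun r => u r * w r)
        (poissonizationBracket Λ E A B') p
      = u p * poissonizationBracket Λ E w (poissonizationBracket Λ E A B') p
        + w p * poissonizationBracket Λ E u (poissonizationBracket Λ E A B') p :=
    B_mul_fst Λ E _ (du p) (dw p)
  have awp : poissonizationBracket Λ E w A p = - poissonizationBracket Λ E A w p :=
    B_antisym Λ E hΛ w A p
  have aup : poissonizationBracket Λ E u A p = - poissonizationBracket Λ E A u p :=
    B_antisym Λ E hΛ u A p
  unfold Jc
  rw [e1, e2, e3, awp, aup]
  ring

lemma Jc_add₁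
    (hΛ : ∀ (x : Fin N → ℝ) (i j : Fin N), Λ x i j = - Λ x j i)
    (hΛs : ∀ i j : Fin N, ContDiff ℝ (⊤ : ℕ∞) (fun x => Λ x i j))
    (hEs : ∀ i : Fin N, ContDiff ℝ (⊤ : ℕ∞) (fun x => E x i))
    {F₁ F₂ G H : (Fin N → ℝ) × ℝ → ℝ} {p : (Fin N → ℝ) × ℝ} (hp : p.2 ≠ 0)
    (hF₁ : ContDiff ℝ (⊤ : ℕ∞) F₁) (hF₂ : ContDiff ℝ (⊤ : ℕ∞) F₂)
    (hG : ContDiff ℝ (⊤ : ℕ∞) G) (hH : ContDiff ℝ (⊤ : ℕ∞) H) :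
    Jc Λ E (fun q => F₁ q + F₂ q) G H p = Jc Λ E F₁ G H p + Jc Λ E F₂ G H p := by
  have d1 : ∀ q, DifferentiableAt ℝ F₁ q := fun q => (hF₁.differentiable (by simp)).differentiableAt
  have d2 : ∀ q, DifferentiableAt ℝ F₂ q := fun q => (hF₂.differentiable (by simp)).differentiableAt
  have e1 : poissonizationBracket Λ E (fun r => F₁ r + F₂ r)
        (poissonizationBracket Λ E G H) p
      = poissonizationBracket Λ E F₁ (poissonizationBracket Λ E G H) p
        + poissonizationBracket Λ E F₂ (poissonizationBracket Λ E G H) p :=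
    B_add_fst Λ E _ (d1 p) (d2 p)
  have hin2 : poissonizationBracket Λ E H (fun r => F₁ r + F₂ r)
      = fun q => poissonizationBracket Λ E H F₁ q + poissonizationBracket Λ E H F₂ q :=
    funext fun q => B_add_snd Λ E hΛ H (d1 q) (d2 q)
  have e2 : poissonizationBracket Λ E G
        (poissonizationBracket Λ E H (fun r => F₁ r + F₂ r)) p
      = poissonizationBracket Λ E G (poissonizationBracket Λ E H F₁) p
        + poissonizationBracket Λ E G (poissonizationBracket Λ E H F₂) p := by
    rw [hin2]
    exact B_add_snd Λ E hΛ G (B_diffAt Λ E hΛs hEs hp hH hF₁)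
      (B_diffAt Λ E hΛs hEs hp hH hF₂)
  have hin3 : poissonizationBracket Λ E (fun r => F₁ r + F₂ r) G
      = fun q => poissonizationBracket Λ E F₁ G q + poissonizationBracket Λ E F₂ G q :=
    funext fun q => B_add_fst Λ E G (d1 q) (d2 q)
  have e3 : poissonizationBracket Λ E H
        (poissonizationBracket Λ E (fun r => F₁ r + F₂ r) G) p
      = poissonizationBracket Λ E H (poissonizationBracket Λ E F₁ G) p
        + poissonizationBracket Λ E H (poissonizationBracket Λ E F₂ G) p := by
    rw [hin3]
    exact B_add_snd Λ E hΛ H (B_diffAt Λ E hΛs hEs hp hF₁ hG)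
      (B_diffAt Λ E hΛs hEs hp hF₂ hG)
  unfold Jc
  rw [e1, e2, e3]
  ring

end DERIV

section SPAN
variable {N : ℕ} (Λ : (Fin N → ℝ) → Fin N → Fin N → ℝ) (E : (Fin N → ℝ) → Fin N → ℝ)

lemma Jc_base
    (hΛs : ∀ i j : Fin N, ContDiff ℝ (⊤ : ℕ∞) (fun x => Λ x i j))
    (hEs : ∀ i : Fin N, ContDiff ℝ (⊤ : ℕ∞) (fun x => E x i))
    (hJ : ∀ f g h : (Fin N → ℝ) → ℝ,
      ContDiff ℝ (⊤ : ℕ∞) f → ContDiff ℝ (⊤ : ℕ∞) g → ContDiff ℝ (⊤ : ℕ∞) h →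
      ∀ x : Fin N → ℝ,
        jacobiBracket Λ E f (jacobiBracket Λ E g h) x
          + jacobiBracket Λ E g (jacobiBracket Λ E h f) x
          + jacobiBracket Λ E h (jacobiBracket Λ E f g) x = 0)
    {f g h : (Fin N → ℝ) → ℝ} (hf : ContDiff ℝ (⊤ : ℕ∞) f) (hg : ContDiff ℝ (⊤ : ℕ∞) g)
    (hh : ContDiff ℝ (⊤ : ℕ∞) h) (p : (Fin N → ℝ) × ℝ) :
    Jc Λ E (vf f) (vf g) (vf h) p = 0 := by
  unfold Jc
  rw [B_vf Λ E hg hh, B_vf Λ E hf (jacobi_contDiff Λ E hΛs hEs hg hh),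
    B_vf Λ E hh hf, B_vf Λ E hg (jacobi_contDiff Λ E hΛs hEs hh hf),
    B_vf Λ E hf hg, B_vf Λ E hh (jacobi_contDiff Λ E hΛs hEs hf hg)]
  unfold vf
  linear_combination p.2 * (hJ f g h hf hg hh p.1)

lemma span_a
    (hΛ : ∀ (x : Fin N → ℝ) (i j : Fin N), Λ x i j = - Λ x j i)
    (hΛs : ∀ i j : Fin N, ContDiff ℝ (⊤ : ℕ∞) (fun x => Λ x i j))
    (hEs : ∀ i : Fin N, ContDiff ℝ (⊤ : ℕ∞) (fun x => E x i))
    {p : (Fin N → ℝ) × ℝ} (hp : p.2 ≠ 0)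
    (hbase : ∀ f g h : (Fin N → ℝ) → ℝ, ContDiff ℝ (⊤ : ℕ∞) f → ContDiff ℝ (⊤ : ℕ∞) g →
      ContDiff ℝ (⊤ : ℕ∞) h → Jc Λ E (vf f) (vf g) (vf h) p = 0)
    {f g c₁ c₂ c₃ : (Fin N → ℝ) → ℝ}
    (hf : ContDiff ℝ (⊤ : ℕ∞) f) (hg : ContDiff ℝ (⊤ : ℕ∞) g) (h1 : ContDiff ℝ (⊤ : ℕ∞) c₁)
    (h2 : ContDiff ℝ (⊤ : ℕ∞) c₂) (h3 : ContDiff ℝ (⊤ : ℕ∞) c₃) :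
    Jc Λ E (vf f) (vf g) (fun q => vf c₁ q + vf c₂ q * vf c₃ q) p = 0 := by
  have hsm : ContDiff ℝ (⊤ : ℕ∞) (fun q => vf c₂ q * vf c₃ q) :=
    (vf_contDiff h2).mul (vf_contDiff h3)
  rw [Jc_cyc Λ E (vf f) (vf g) _, Jc_cyc Λ E (vf g) _ (vf f),
    Jc_add₁ Λ E hΛ hΛs hEs hp (vf_contDiff h1) hsm (vf_contDiff hf) (vf_contDiff hg),
    hbase c₁ f g h1 hf hg,
    Jc_cyc Λ E _ (vf f) (vf g),
    Jc_deriv₃ Λ E hΛ hΛs hEs hp (vf_contDiff hf) (vf_contDiff hg)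
      (vf_contDiff h2) (vf_contDiff h3),
    hbase f g c₃ hf hg h3, hbase f g c₂ hf hg h2]
  ring

lemma span_b
    (hΛ : ∀ (x : Fin N → ℝ) (i j : Fin N), Λ x i j = - Λ x j i)
    (hΛs : ∀ i j : Fin N, ContDiff ℝ (⊤ : ℕ∞) (fun x => Λ x i j))
    (hEs : ∀ i : Fin N, ContDiff ℝ (⊤ : ℕ∞) (fun x => E x i))
    {p : (Fin N → ℝ) × ℝ} (hp : p.2 ≠ 0)
    (hbase : ∀ f g h : (Fin N → ℝ) → ℝ, ContDiff ℝ (⊤ : ℕ∞) f → ContDiff ℝ (⊤ : ℕ∞) g →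
      ContDiff ℝ (⊤ : ℕ∞) h → Jc Λ E (vf f) (vf g) (vf h) p = 0)
    {f b₁ b₂ b₃ c₁ c₂ c₃ : (Fin N → ℝ) → ℝ}
    (hf : ContDiff ℝ (⊤ : ℕ∞) f)
    (hb1 : ContDiff ℝ (⊤ : ℕ∞) b₁) (hb2 : ContDiff ℝ (⊤ : ℕ∞) b₂) (hb3 : ContDiff ℝ (⊤ : ℕ∞) b₃)
    (hc1 : ContDiff ℝ (⊤ : ℕ∞) c₁) (hc2 : ContDiff ℝ (⊤ : ℕ∞) c₂) (hc3 : ContDiff ℝ (⊤ : ℕ∞) c₃) :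
    Jc Λ E (vf f) (fun q => vf b₁ q + vf b₂ q * vf b₃ q)
      (fun q => vf c₁ q + vf c₂ q * vf c₃ q) p = 0 := by
  have hBsm : ContDiff ℝ (⊤ : ℕ∞) (fun q => vf b₂ q * vf b₃ q) :=
    (vf_contDiff hb2).mul (vf_contDiff hb3)
  have hCsp : ContDiff ℝ (⊤ : ℕ∞) (fun q => vf c₁ q + vf c₂ q * vf c₃ q) :=
    (vf_contDiff hc1).add ((vf_contDiff hc2).mul (vf_contDiff hc3))
  rw [Jc_cyc Λ E (vf f) _ _,
    Jc_add₁ Λ E hΛ hΛs hEs hp (vf_contDiff hb1) hBsm hCsp (vf_contDiff hf)]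
  have e1 : Jc Λ E (vf b₁) (fun q => vf c₁ q + vf c₂ q * vf c₃ q) (vf f) p = 0 := by
    rw [Jc_cyc Λ E (vf b₁) _ (vf f), Jc_cyc Λ E _ (vf f) (vf b₁)]
    exact span_a Λ E hΛ hΛs hEs hp hbase hf hb1 hc1 hc2 hc3
  have e2 : Jc Λ E (fun q => vf b₂ q * vf b₃ q)
      (fun q => vf c₁ q + vf c₂ q * vf c₃ q) (vf f) p = 0 := by
    rw [Jc_cyc Λ E _ _ (vf f),
      Jc_deriv₃ Λ E hΛ hΛs hEs hp hCsp (vf_contDiff hf)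
        (vf_contDiff hb2) (vf_contDiff hb3)]
    have e2a : Jc Λ E (fun q => vf c₁ q + vf c₂ q * vf c₃ q) (vf f) (vf b₃) p = 0 := by
      rw [Jc_cyc Λ E _ (vf f) (vf b₃)]
      exact span_a Λ E hΛ hΛs hEs hp hbase hf hb3 hc1 hc2 hc3
    have e2b : Jc Λ E (fun q => vf c₁ q + vf c₂ q * vf c₃ q) (vf f) (vf b₂) p = 0 := by
      rw [Jc_cyc Λ E _ (vf f) (vf b₂)]
      exact span_a Λ E hΛ hΛs hEs hp hbase hf hb2 hc1 hc2 hc3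
    rw [e2a, e2b]; ring
  rw [e1, e2]; ring

lemma span_c
    (hΛ : ∀ (x : Fin N → ℝ) (i j : Fin N), Λ x i j = - Λ x j i)
    (hΛs : ∀ i j : Fin N, ContDiff ℝ (⊤ : ℕ∞) (fun x => Λ x i j))
    (hEs : ∀ i : Fin N, ContDiff ℝ (⊤ : ℕ∞) (fun x => E x i))
    {p : (Fin N → ℝ) × ℝ} (hp : p.2 ≠ 0)
    (hbase : ∀ f g h : (Fin N → ℝ) → ℝ, ContDiff ℝ (⊤ : ℕ∞) f → ContDiff ℝ (⊤ : ℕ∞) g →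
      ContDiff ℝ (⊤ : ℕ∞) h → Jc Λ E (vf f) (vf g) (vf h) p = 0)
    {a₁ a₂ a₃ b₁ b₂ b₃ c₁ c₂ c₃ : (Fin N → ℝ) → ℝ}
    (ha1 : ContDiff ℝ (⊤ : ℕ∞) a₁) (ha2 : ContDiff ℝ (⊤ : ℕ∞) a₂) (ha3 : ContDiff ℝ (⊤ : ℕ∞) a₃)
    (hb1 : ContDiff ℝ (⊤ : ℕ∞) b₁) (hb2 : ContDiff ℝ (⊤ : ℕ∞) b₂) (hb3 : ContDiff ℝ (⊤ : ℕ∞) b₃)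
    (hc1 : ContDiff ℝ (⊤ : ℕ∞) c₁) (hc2 : ContDiff ℝ (⊤ : ℕ∞) c₂) (hc3 : ContDiff ℝ (⊤ : ℕ∞) c₃) :
    Jc Λ E (fun q => vf a₁ q + vf a₂ q * vf a₃ q)
      (fun q => vf b₁ q + vf b₂ q * vf b₃ q)
      (fun q => vf c₁ q + vf c₂ q * vf c₃ q) p = 0 := by
  have hAsm : ContDiff ℝ (⊤ : ℕ∞) (fun q => vf a₂ q * vf a₃ q) :=
    (vf_contDiff ha2).mul (vf_contDiff ha3)
  have hBsp : ContDiff ℝ (⊤ : ℕ∞) (fun q => vf b₁ q + vf b₂ q * vf b₃ q) :=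
    (vf_contDiff hb1).add ((vf_contDiff hb2).mul (vf_contDiff hb3))
  have hCsp : ContDiff ℝ (⊤ : ℕ∞) (fun q => vf c₁ q + vf c₂ q * vf c₃ q) :=
    (vf_contDiff hc1).add ((vf_contDiff hc2).mul (vf_contDiff hc3))
  rw [Jc_add₁ Λ E hΛ hΛs hEs hp (vf_contDiff ha1) hAsm hBsp hCsp]
  have e1 : Jc Λ E (vf a₁) (fun q => vf b₁ q + vf b₂ q * vf b₃ q)
      (fun q => vf c₁ q + vf c₂ q * vf c₃ q) p = 0 :=
    span_b Λ E hΛ hΛs hEs hp hbase ha1 hb1 hb2 hb3 hc1 hc2 hc3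
  have e2 : Jc Λ E (fun q => vf a₂ q * vf a₃ q)
      (fun q => vf b₁ q + vf b₂ q * vf b₃ q)
      (fun q => vf c₁ q + vf c₂ q * vf c₃ q) p = 0 := by
    rw [Jc_cyc Λ E _ _ _,
      Jc_deriv₃ Λ E hΛ hΛs hEs hp hBsp hCsp (vf_contDiff ha2) (vf_contDiff ha3)]
    have e2a : Jc Λ E (fun q => vf b₁ q + vf b₂ q * vf b₃ q)
        (fun q => vf c₁ q + vf c₂ q * vf c₃ q) (vf a₃) p = 0 := by
      rw [show Jc Λ E (fun q => vf b₁ q + vf b₂ q * vf b₃ q)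
            (fun q => vf c₁ q + vf c₂ q * vf c₃ q) (vf a₃) p
          = Jc Λ E (vf a₃) (fun q => vf b₁ q + vf b₂ q * vf b₃ q)
            (fun q => vf c₁ q + vf c₂ q * vf c₃ q) p from by
        rw [Jc_cyc Λ E (vf a₃) _ _]]
      exact span_b Λ E hΛ hΛs hEs hp hbase ha3 hb1 hb2 hb3 hc1 hc2 hc3
    have e2b : Jc Λ E (fun q => vf b₁ q + vf b₂ q * vf b₃ q)
        (fun q => vf c₁ q + vf c₂ q * vf c₃ q) (vf a₂) p = 0 := by
      rw [show Jc Λ E (fun q => vf b₁ q + vf b₂ q * vf b₃ q)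
            (fun q => vf c₁ q + vf c₂ q * vf c₃ q) (vf a₂) p
          = Jc Λ E (vf a₂) (fun q => vf b₁ q + vf b₂ q * vf b₃ q)
            (fun q => vf c₁ q + vf c₂ q * vf c₃ q) p from by
        rw [Jc_cyc Λ E (vf a₂) _ _]]
      exact span_b Λ E hΛ hΛs hEs hp hbase ha2 hb1 hb2 hb3 hc1 hc2 hc3
    rw [e2a, e2b]; ring
  rw [e1, e2]; ring

end SPAN

section QUAD
variable {N : ℕ}

noncomputable def quadf (x : Fin N → ℝ) (c0 : ℝ) (c1 : Fin N → ℝ)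
    (M : Fin N → Fin N → ℝ) : (Fin N → ℝ) → ℝ :=
  fun y => c0 + (∑ k, c1 k * (y k - x k)) + ∑ k, ∑ l, M k l * (y k - x k) * (y l - x l)

lemma coord_contDiff (x : Fin N → ℝ) (k : Fin N) :
    ContDiff ℝ (⊤ : ℕ∞) (fun y : Fin N → ℝ => y k - x k) :=
  (ContinuousLinearMap.proj k : (Fin N → ℝ) →L[ℝ] ℝ).contDiff.sub contDiff_const

lemma quadf_contDiff (x : Fin N → ℝ) (c0 : ℝ) (c1 : Fin N → ℝ)
    (M : Fin N → Fin N → ℝ) : ContDiff ℝ (⊤ : ℕ∞) (quadf x c0 c1 M) := by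
  unfold quadf
  apply ContDiff.add
  · exact contDiff_const.add
      (ContDiff.sum fun k _ => contDiff_const.mul (coord_contDiff x k))
  · exact ContDiff.sum fun k _ => ContDiff.sum fun l _ =>
      (contDiff_const.mul (coord_contDiff x k)).mul (coord_contDiff x l)

lemma hasFDerivAt_coord (x : Fin N → ℝ) (k : Fin N) (y : Fin N → ℝ) :
    HasFDerivAt (fun y : Fin N → ℝ => y k - x k)
      (ContinuousLinearMap.proj k : (Fin N → ℝ) →L[ℝ] ℝ) y :=
  (ContinuousLinearMap.proj k : (Fin N → ℝ) →L[ℝ] ℝ).hasFDerivAt.sub_const (x k)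

lemma fdv_coord (x : Fin N → ℝ) (k : Fin N) (y v : Fin N → ℝ) :
    fderiv ℝ (fun y : Fin N → ℝ => y k - x k) y v = v k := by
  rw [(hasFDerivAt_coord x k y).fderiv]; rfl

lemma diffAt_coord (x : Fin N → ℝ) (k : Fin N) (y : Fin N → ℝ) :
    DifferentiableAt ℝ (fun y : Fin N → ℝ => y k - x k) y :=
  (hasFDerivAt_coord x k y).differentiableAt

lemma pd_quadf (x : Fin N → ℝ) (c0 : ℝ) (c1 : Fin N → ℝ)
    (M : Fin N → Fin N → ℝ) (y : Fin N → ℝ) (i : Fin N) :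
    pd (quadf x c0 c1 M) y i
      = c1 i + ((∑ k, M k i * (y k - x k)) + (∑ l, M i l * (y l - x l))) := by
  unfold pd quadf
  have dlin : DifferentiableAt ℝ (fun y : Fin N → ℝ => ∑ k, c1 k * (y k - x k)) y :=
    DifferentiableAt.fun_sum fun k _ => (differentiableAt_const _).fun_mul (diffAt_coord x k y)
  have dquad : DifferentiableAt ℝ
      (fun y : Fin N → ℝ => ∑ k, ∑ l, M k l * (y k - x k) * (y l - x l)) y :=
    DifferentiableAt.fun_sum fun k _ => DifferentiableAt.fun_sum fun l _ =>
      ((differentiableAt_const _).fun_mul (diffAt_coord x k y)).fun_mul (diffAt_coord x l y)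
  rw [fdv_add ((differentiableAt_const c0).fun_add dlin) dquad,
    fdv_add (differentiableAt_const c0) dlin, fdv_const]
  have e1 : fderiv ℝ (fun y : Fin N → ℝ => ∑ k, c1 k * (y k - x k)) y (Pi.single i 1)
      = c1 i := by
    rw [fdv_sum (fun k _ => (differentiableAt_const _).fun_mul (diffAt_coord x k y))]
    have : ∀ k, fderiv ℝ (fun y : Fin N → ℝ => c1 k * (y k - x k)) y (Pi.single i 1)
        = if k = i then c1 k else 0 := by
      intro k
      rw [fdv_mul (differentiableAt_const _) (diffAt_coord x k y), fdv_coord, fdv_const]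
      simp [Pi.single_apply]
    rw [Finset.sum_congr rfl fun k _ => this k]
    simp
  have e2 : fderiv ℝ
      (fun y : Fin N → ℝ => ∑ k, ∑ l, M k l * (y k - x k) * (y l - x l)) y (Pi.single i 1)
      = (∑ k, M k i * (y k - x k)) + (∑ l, M i l * (y l - x l)) := by
    rw [fdv_sum (fun k _ => DifferentiableAt.fun_sum fun l _ =>
      ((differentiableAt_const _).fun_mul (diffAt_coord x k y)).fun_mul (diffAt_coord x l y))]
    have hin : ∀ k, fderiv ℝ
        (fun y : Fin N → ℝ => ∑ l, M k l * (y k - x k) * (y l - x l)) y (Pi.single i 1)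
        = M k i * (y k - x k) + (if k = i then (∑ l, M k l * (y l - x l)) else 0) := by
      intro k
      rw [fdv_sum (fun l _ =>
        ((differentiableAt_const _).fun_mul (diffAt_coord x k y)).fun_mul (diffAt_coord x l y))]
      have hterm : ∀ l, fderiv ℝ (fun y : Fin N → ℝ => M k l * (y k - x k) * (y l - x l)) y
          (Pi.single i 1)
          = (if l = i then M k l * (y k - x k) else 0)
            + (if k = i then M k l * (y l - x l) else 0) := by
        intro l
        rw [fdv_mul ((differentiableAt_const _).fun_mul (diffAt_coord x k y))
            (diffAt_coord x l y),
          fdv_mul (differentiableAt_const _) (diffAt_coord x k y), fdv_coord, fdv_coord,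
          fdv_const]
        by_cases h1 : l = i <;> by_cases h2 : k = i <;>
          simp [h1, h2, Pi.single_apply] <;> ring
      have s1 : (∑ l, if l = i then M k l * (y k - x k) else 0)
          = M k i * (y k - x k) := by simp
      have s2 : (∑ l, if k = i then M k l * (y l - x l) else 0)
          = if k = i then (∑ l, M k l * (y l - x l)) else 0 := by
        by_cases h : k = i <;> simp [h]
      rw [Finset.sum_congr rfl fun l _ => hterm l, Finset.sum_add_distrib, s1, s2]
    rw [Finset.sum_congr rfl fun k _ => hin k, Finset.sum_add_distrib]
    congr 1
    simp
  rw [e1, e2]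
  ring

end QUAD

section QUAD2
variable {N : ℕ}

lemma fdv_linsum (x c y : Fin N → ℝ) (j : Fin N) :
    fderiv ℝ (fun y : Fin N → ℝ => ∑ k, c k * (y k - x k)) y (Pi.single j 1) = c j := by
  rw [fdv_sum (fun k _ => (differentiableAt_const _).fun_mul (diffAt_coord x k y))]
  have : ∀ k, fderiv ℝ (fun y : Fin N → ℝ => c k * (y k - x k)) y (Pi.single j 1)
      = if k = j then c k else 0 := by
    intro k
    rw [fdv_mul (differentiableAt_const _) (diffAt_coord x k y), fdv_coord, fdv_const]
    simp [Pi.single_apply]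
  rw [Finset.sum_congr rfl fun k _ => this k]
  simp

lemma quadf_center (x : Fin N → ℝ) (c0 : ℝ) (c1 : Fin N → ℝ) (M : Fin N → Fin N → ℝ) :
    quadf x c0 c1 M x = c0 := by simp [quadf]

lemma pd_quadf_center (x : Fin N → ℝ) (c0 : ℝ) (c1 : Fin N → ℝ)
    (M : Fin N → Fin N → ℝ) (i : Fin N) : pd (quadf x c0 c1 M) x i = c1 i := by
  rw [pd_quadf]; simp

lemma pd_pd_quadf (x : Fin N → ℝ) (c0 : ℝ) (c1 : Fin N → ℝ)
    (M : Fin N → Fin N → ℝ) (y : Fin N → ℝ) (i j : Fin N) :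
    pd (fun y => pd (quadf x c0 c1 M) y i) y j = M j i + M i j := by
  have hfun : (fun y => pd (quadf x c0 c1 M) y i)
      = fun y => c1 i + ((∑ k, (fun k => M k i) k * (y k - x k))
          + (∑ l, (fun l => M i l) l * (y l - x l))) :=
    funext fun y => pd_quadf x c0 c1 M y i
  rw [hfun]
  unfold pd
  have d1 : DifferentiableAt ℝ (fun y : Fin N → ℝ => ∑ k, (fun k => M k i) k * (y k - x k)) y :=
    DifferentiableAt.fun_sum fun k _ => (differentiableAt_const _).fun_mul (diffAt_coord x k y)
  have d2 : DifferentiableAt ℝ (fun y : Fin N → ℝ => ∑ l, (fun l => M i l) l * (y l - x l)) y :=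
    DifferentiableAt.fun_sum fun l _ => (differentiableAt_const _).fun_mul (diffAt_coord x l y)
  rw [fdv_add (differentiableAt_const _) (d1.fun_add d2), fdv_const,
    fdv_add d1 d2, fdv_linsum x (fun k => M k i) y j, fdv_linsum x (fun l => M i l) y j]
  ring

/-- lift of a pair of base functions: `s f(x) + s² g(x)`. -/
noncomputable def Kf {N : ℕ} (f₁ g₁ : (Fin N → ℝ) → ℝ) : (Fin N → ℝ) × ℝ → ℝ :=
  fun q => q.2 * f₁ q.1 + q.2 * (q.2 * g₁ q.1)

noncomputable def Lf {N : ℕ} (f₁ g₁ : (Fin N → ℝ) → ℝ) : (Fin N → ℝ) × ℝ → ℝ :=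
  fun q => f₁ q.1 + (q.2 * g₁ q.1 + q.2 * g₁ q.1)

lemma Kf_contDiff {f₁ g₁ : (Fin N → ℝ) → ℝ} (hf : ContDiff ℝ (⊤ : ℕ∞) f₁)
    (hg : ContDiff ℝ (⊤ : ℕ∞) g₁) : ContDiff ℝ (⊤ : ℕ∞) (Kf f₁ g₁) :=
  (contDiff_snd.mul (hf.comp contDiff_fst)).add
    (contDiff_snd.mul (contDiff_snd.mul (hg.comp contDiff_fst)))

lemma fdv_Kf {f₁ g₁ : (Fin N → ℝ) → ℝ} (hf : ContDiff ℝ (⊤ : ℕ∞) f₁) (hg : ContDiff ℝ (⊤ : ℕ∞) g₁)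
    (q v : (Fin N → ℝ) × ℝ) :
    fderiv ℝ (Kf f₁ g₁) q v
      = (q.2 * fderiv ℝ f₁ q.1 v.1 + f₁ q.1 * v.2)
        + (q.2 * (q.2 * fderiv ℝ g₁ q.1 v.1 + g₁ q.1 * v.2) + q.2 * g₁ q.1 * v.2) := by
  have d1 : DifferentiableAt ℝ (vf f₁) q :=
    ((vf_contDiff hf).differentiable (by simp)) q
  have dg : DifferentiableAt ℝ (vf g₁) q :=
    ((vf_contDiff hg).differentiable (by simp)) q
  have d2 : DifferentiableAt ℝ (fun r : (Fin N → ℝ) × ℝ => r.2 * vf g₁ r) q :=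
    (differentiable_snd.differentiableAt).mul dg
  unfold Kf
  rw [show (fun q : (Fin N → ℝ) × ℝ => q.2 * f₁ q.1 + q.2 * (q.2 * g₁ q.1))
      = fun q => vf f₁ q + q.2 * vf g₁ q from rfl]
  rw [fdv_add d1 d2, fdv_vf hf,
    fdv_mul (differentiable_snd.differentiableAt) dg, fdv_vf hg, fdv_snd]
  unfold vf
  ring

lemma pdx_Kf {f₁ g₁ : (Fin N → ℝ) → ℝ} (hf : ContDiff ℝ (⊤ : ℕ∞) f₁) (hg : ContDiff ℝ (⊤ : ℕ∞) g₁)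
    (q : (Fin N → ℝ) × ℝ) (i : Fin N) :
    fderiv ℝ (Kf f₁ g₁) q (bv i) = q.2 * pd f₁ q.1 i + q.2 * (q.2 * pd g₁ q.1 i) := by
  rw [fdv_Kf hf hg]
  unfold pd bv
  simp

lemma pds_Kf {f₁ g₁ : (Fin N → ℝ) → ℝ} (hf : ContDiff ℝ (⊤ : ℕ∞) f₁) (hg : ContDiff ℝ (⊤ : ℕ∞) g₁)
    (q : (Fin N → ℝ) × ℝ) :
    fderiv ℝ (Kf f₁ g₁) q sv = Lf f₁ g₁ q := by
  rw [fdv_Kf hf hg]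
  unfold Lf sv
  simp

lemma fdv_Lf {f₁ g₁ : (Fin N → ℝ) → ℝ} (hf : ContDiff ℝ (⊤ : ℕ∞) f₁) (hg : ContDiff ℝ (⊤ : ℕ∞) g₁)
    (q w : (Fin N → ℝ) × ℝ) :
    fderiv ℝ (Lf f₁ g₁) q w
      = fderiv ℝ f₁ q.1 w.1
        + ((q.2 * fderiv ℝ g₁ q.1 w.1 + g₁ q.1 * w.2)
          + (q.2 * fderiv ℝ g₁ q.1 w.1 + g₁ q.1 * w.2)) := by
  have hfd : DifferentiableAt ℝ f₁ q.1 := (hf.differentiable (by simp)).differentiableAt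
  have d0 : DifferentiableAt ℝ (fun r : (Fin N → ℝ) × ℝ => f₁ r.1) q :=
    hfd.comp q differentiable_fst.differentiableAt
  have dg : DifferentiableAt ℝ (vf g₁) q :=
    ((vf_contDiff hg).differentiable (by simp)) q
  unfold Lf
  rw [show (fun q : (Fin N → ℝ) × ℝ => f₁ q.1 + (q.2 * g₁ q.1 + q.2 * g₁ q.1))
      = fun q => f₁ q.1 + (vf g₁ q + vf g₁ q) from rfl]
  rw [fdv_add d0 (dg.fun_add dg), fdv_comp_fst hfd, fdv_add dg dg, fdv_vf hg]

-- second derivative components of Kf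
lemma D2_Kf_xx {f₁ g₁ : (Fin N → ℝ) → ℝ} (hf : ContDiff ℝ (⊤ : ℕ∞) f₁) (hg : ContDiff ℝ (⊤ : ℕ∞) g₁)
    (p : (Fin N → ℝ) × ℝ) (i j : Fin N) :
    fderiv ℝ (fderiv ℝ (Kf f₁ g₁)) p (bv j) (bv i)
      = p.2 * pd (fun y => pd f₁ y i) p.1 j
        + p.2 * (p.2 * pd (fun y => pd g₁ y i) p.1 j) := by
  have hA : ContDiff ℝ (⊤ : ℕ∞) (fun y => pd f₁ y i) := contDiff_fdv hf _
  have hB : ContDiff ℝ (⊤ : ℕ∞) (fun y => pd g₁ y i) := contDiff_fdv hg _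
  have hfun : (fun q => fderiv ℝ (Kf f₁ g₁) q (bv i))
      = Kf (fun y => pd f₁ y i) (fun y => pd g₁ y i) :=
    funext fun q => by rw [pdx_Kf hf hg]; rfl
  rw [← fderiv_fdv (Kf_contDiff hf hg) (bv i) p (bv j), hfun]
  exact pdx_Kf hA hB p j

lemma D2_Kf_sx {f₁ g₁ : (Fin N → ℝ) → ℝ} (hf : ContDiff ℝ (⊤ : ℕ∞) f₁) (hg : ContDiff ℝ (⊤ : ℕ∞) g₁)
    (p : (Fin N → ℝ) × ℝ) (i : Fin N) :
    fderiv ℝ (fderiv ℝ (Kf f₁ g₁)) p sv (bv i)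
      = pd f₁ p.1 i + (p.2 * pd g₁ p.1 i + p.2 * pd g₁ p.1 i) := by
  have hA : ContDiff ℝ (⊤ : ℕ∞) (fun y => pd f₁ y i) := contDiff_fdv hf _
  have hB : ContDiff ℝ (⊤ : ℕ∞) (fun y => pd g₁ y i) := contDiff_fdv hg _
  have hfun : (fun q => fderiv ℝ (Kf f₁ g₁) q (bv i))
      = Kf (fun y => pd f₁ y i) (fun y => pd g₁ y i) :=
    funext fun q => by rw [pdx_Kf hf hg]; rfl
  rw [← fderiv_fdv (Kf_contDiff hf hg) (bv i) p sv, hfun, pds_Kf hA hB]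
  rfl

lemma D2_Kf_xs {f₁ g₁ : (Fin N → ℝ) → ℝ} (hf : ContDiff ℝ (⊤ : ℕ∞) f₁) (hg : ContDiff ℝ (⊤ : ℕ∞) g₁)
    (p : (Fin N → ℝ) × ℝ) (j : Fin N) :
    fderiv ℝ (fderiv ℝ (Kf f₁ g₁)) p (bv j) sv
      = pd f₁ p.1 j + (p.2 * pd g₁ p.1 j + p.2 * pd g₁ p.1 j) := by
  have hfun : (fun q => fderiv ℝ (Kf f₁ g₁) q sv) = Lf f₁ g₁ :=
    funext fun q => pds_Kf hf hg q
  rw [← fderiv_fdv (Kf_contDiff hf hg) sv p (bv j), hfun, fdv_Lf hf hg]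
  unfold pd bv
  simp

lemma D2_Kf_ss {f₁ g₁ : (Fin N → ℝ) → ℝ} (hf : ContDiff ℝ (⊤ : ℕ∞) f₁) (hg : ContDiff ℝ (⊤ : ℕ∞) g₁)
    (p : (Fin N → ℝ) × ℝ) :
    fderiv ℝ (fderiv ℝ (Kf f₁ g₁)) p sv sv = g₁ p.1 + g₁ p.1 := by
  have hfun : (fun q => fderiv ℝ (Kf f₁ g₁) q sv) = Lf f₁ g₁ :=
    funext fun q => pds_Kf hf hg q
  rw [← fderiv_fdv (Kf_contDiff hf hg) sv p sv, hfun, fdv_Lf hf hg]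
  unfold sv
  simp

end QUAD2

section MATCH
variable {N : ℕ}

lemma match_jets {F : (Fin N → ℝ) × ℝ → ℝ} (hF : ContDiff ℝ (⊤ : ℕ∞) F)
    {p : (Fin N → ℝ) × ℝ} (hp : p.2 ≠ 0) :
    ∃ f₁ g₁ : (Fin N → ℝ) → ℝ, ContDiff ℝ (⊤ : ℕ∞) f₁ ∧ ContDiff ℝ (⊤ : ℕ∞) g₁ ∧
      fderiv ℝ (Kf f₁ g₁) p = fderiv ℝ F p ∧
      fderiv ℝ (fderiv ℝ (Kf f₁ g₁)) p = fderiv ℝ (fderiv ℝ F) p := by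
  have hsym : ∀ v w, fderiv ℝ (fderiv ℝ F) p v w = fderiv ℝ (fderiv ℝ F) p w v :=
    sndDeriv_symm hF p
  refine ⟨quadf p.1 (fderiv ℝ F p sv - p.2 * fderiv ℝ (fderiv ℝ F) p sv sv)
      (fun k => (2 * fderiv ℝ F p (bv k) - p.2 * fderiv ℝ (fderiv ℝ F) p (bv k) sv) / p.2)
      (fun k l => fderiv ℝ (fderiv ℝ F) p (bv k) (bv l) / (2 * p.2)),
    quadf p.1 (fderiv ℝ (fderiv ℝ F) p sv sv / 2)
      (fun k => (p.2 * fderiv ℝ (fderiv ℝ F) p (bv k) sv - fderiv ℝ F p (bv k)) / p.2 ^ 2)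
      (fun _ _ => 0),
    quadf_contDiff _ _ _ _, quadf_contDiff _ _ _ _, ?_, ?_⟩
  · refine clm_ext_basis (fun i => ?_) ?_
    · rw [pdx_Kf (quadf_contDiff _ _ _ _) (quadf_contDiff _ _ _ _),
        pd_quadf_center, pd_quadf_center]
      field_simp
      try ring
    · rw [pds_Kf (quadf_contDiff _ _ _ _) (quadf_contDiff _ _ _ _)]
      unfold Lf
      rw [quadf_center, quadf_center]
      field_simp
      try ring
  · refine clm_ext_basis (fun j => ?_) ?_
    · refine clm_ext_basis (fun i => ?_) ?_
      · rw [D2_Kf_xx (quadf_contDiff _ _ _ _) (quadf_contDiff _ _ _ _),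
          pd_pd_quadf, pd_pd_quadf, hsym (bv i) (bv j)]
        field_simp
        try ring
      · rw [D2_Kf_xs (quadf_contDiff _ _ _ _) (quadf_contDiff _ _ _ _),
          pd_quadf_center, pd_quadf_center]
        field_simp
        try ring
    · refine clm_ext_basis (fun i => ?_) ?_
      · rw [D2_Kf_sx (quadf_contDiff _ _ _ _) (quadf_contDiff _ _ _ _),
          pd_quadf_center, pd_quadf_center, hsym sv (bv i)]
        field_simp
        try ring
      · rw [D2_Kf_ss (quadf_contDiff _ _ _ _) (quadf_contDiff _ _ _ _),
          quadf_center]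
        ring
end MATCH

/-- The Poissonization bracket satisfies the Jacobi identity at all points with `s ≠ 0`
if and only if the Jacobi bracket of `(Λ, E)` satisfies the Jacobi identity: the
trivialized form of the one-to-one correspondence between Jacobi brackets and
homogeneous degree `−1` Poisson structures on the associated `ℝ^×`-principal bundle. -/
theorem poissonization_jacobi_iff {N : ℕ}
    (Λ : (Fin N → ℝ) → Fin N → Fin N → ℝ)
    (hΛ : ∀ (x : Fin N → ℝ) (i j : Fin N), Λ x i j = - Λ x j i)
    (hΛsmooth : ∀ i j : Fin N, ContDiff ℝ (⊤ : ℕ∞) (fun x => Λ x i j))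
    (E : (Fin N → ℝ) → Fin N → ℝ)
    (hEsmooth : ∀ i : Fin N, ContDiff ℝ (⊤ : ℕ∞) (fun x => E x i)) :
    (∀ F G H : (Fin N → ℝ) × ℝ → ℝ,
      ContDiff ℝ (⊤ : ℕ∞) F → ContDiff ℝ (⊤ : ℕ∞) G → ContDiff ℝ (⊤ : ℕ∞) H →
      ∀ (x : Fin N → ℝ) (s : ℝ), s ≠ 0 →
        poissonizationBracket Λ E F (poissonizationBracket Λ E G H) (x, s)
          + poissonizationBracket Λ E G (poissonizationBracket Λ E H F) (x, s)
          + poissonizationBracket Λ E H (poissonizationBracket Λ E F G) (x, s) = 0) ↔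
    (∀ f g h : (Fin N → ℝ) → ℝ,
      ContDiff ℝ (⊤ : ℕ∞) f → ContDiff ℝ (⊤ : ℕ∞) g → ContDiff ℝ (⊤ : ℕ∞) h →
      ∀ x : Fin N → ℝ,
        jacobiBracket Λ E f (jacobiBracket Λ E g h) x
          + jacobiBracket Λ E g (jacobiBracket Λ E h f) x
          + jacobiBracket Λ E h (jacobiBracket Λ E f g) x = 0) := by
  constructor
  · -- Poisson Jacobi implies Jacobi-bracket Jacobi
    intro hP f g h hf hg hh x
    have key := hP (vf f) (vf g) (vf h) (vf_contDiff hf) (vf_contDiff hg)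
      (vf_contDiff hh) x 1 one_ne_zero
    rw [B_vf Λ E hg hh, B_vf Λ E hf (jacobi_contDiff Λ E hΛsmooth hEsmooth hg hh),
      B_vf Λ E hh hf, B_vf Λ E hg (jacobi_contDiff Λ E hΛsmooth hEsmooth hh hf),
      B_vf Λ E hf hg, B_vf Λ E hh (jacobi_contDiff Λ E hΛsmooth hEsmooth hf hg)] at key
    unfold vf at key
    simpa using key
  · -- Jacobi-bracket Jacobi implies Poisson Jacobi
    intro hJ F G H hF hG hH x s hs
    have hp : ((x, s) : (Fin N → ℝ) × ℝ).2 ≠ 0 := hs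
    have hbase : ∀ f g h : (Fin N → ℝ) → ℝ, ContDiff ℝ (⊤ : ℕ∞) f → ContDiff ℝ (⊤ : ℕ∞) g →
        ContDiff ℝ (⊤ : ℕ∞) h → Jc Λ E (vf f) (vf g) (vf h) (x, s) = 0 :=
      fun f g h hf hg hh => Jc_base Λ E hΛsmooth hEsmooth hJ hf hg hh (x, s)
    obtain ⟨fF, gF, hfF, hgF, jF1, jF2⟩ := match_jets hF hp
    obtain ⟨fG, gG, hfG, hgG, jG1, jG2⟩ := match_jets hG hp
    obtain ⟨fH, gH, hfH, hgH, jH1, jH2⟩ := match_jets hH hp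
    have hcongr : Jc Λ E F G H (x, s)
        = Jc Λ E (Kf fF gF) (Kf fG gG) (Kf fH gH) (x, s) :=
      Jc_congr_all Λ E hΛ hΛsmooth hEsmooth hp hF hG hH
        (Kf_contDiff hfF hgF) (Kf_contDiff hfG hgG) (Kf_contDiff hfH hgH)
        jF1.symm jF2.symm jG1.symm jG2.symm jH1.symm jH2.symm
    have eK : ∀ f₁ g₁ : (Fin N → ℝ) → ℝ,
        Kf f₁ g₁ = (fun q => vf f₁ q + vf (fun _ => (1 : ℝ)) q * vf g₁ q) :=
      fun f₁ g₁ => funext fun q => by unfold Kf vf; ring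
    have hspan : Jc Λ E (Kf fF gF) (Kf fG gG) (Kf fH gH) (x, s) = 0 := by
      rw [eK fF gF, eK fG gG, eK fH gH]
      exact span_c Λ E hΛ hΛsmooth hEsmooth hp hbase hfF contDiff_const hgF
        hfG contDiff_const hgG hfH contDiff_const hgH
    have : Jc Λ E F G H (x, s) = 0 := by rw [hcongr]; exact hspan
    exact this
end

section
/- Let X : ℝ² → ℝ and g, h : ℝ → ℝ be smooth, where ℝ² has coordinates (u,v). Represent a 1-form on ℝ² by its pair of component functions ω = (ω_u, ω_v), with exterior derivative dω := ∂_u ω_v − ∂_v ω_u and wedge product (a,b) ∧ (c,d) := a·d − b·c; write dX = (∂_u X, ∂_v X). Define Y = g' ∘ X, Z = X·(g' ∘ X) − g ∘ X, and the 1-forms η_x = (g'' ∘ X)·dX, η_y = −(1 + X·(h ∘ X))·dX, η_z = (h ∘ X)·dX. Then the field equations of the almost Poisson sigma model for Λ = ∂_x ∧ (∂_y + x ∂_z) hold: dX = −η_y − X·η_z, dY = η_x, dZ = X·η_x (equalities of component pairs), and d(η_x) = η_z ∧ η_x, d(η_y) = 0, d(η_z) = 0. (These data define a skew algebroid morphism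 TΣ → T*ℝ³ for the skew algebroid of Λ.) -/
/-- The partial derivative `∂_u f` of `f : ℝ² → ℝ` (coordinates `(u,v)`). -/
noncomputable def du (f : ℝ × ℝ → ℝ) (p : ℝ × ℝ) : ℝ := fderiv ℝ f p (1, 0)

/-- The partial derivative `∂_v f` of `f : ℝ² → ℝ` (coordinates `(u,v)`). -/
noncomputable def dv (f : ℝ × ℝ → ℝ) (p : ℝ × ℝ) : ℝ := fderiv ℝ f p (0, 1)

/-- A 1-form on `ℝ²` represented by its pair of component functions `(ω_u, ω_v)`. -/
abbrev OneForm : Type := (ℝ × ℝ → ℝ) × (ℝ × ℝ → ℝ)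

/-- The exterior derivative `dω = ∂_u ω_v − ∂_v ω_u` of a 1-form (as a function on `ℝ²`). -/
noncomputable def extDer (ω : OneForm) (p : ℝ × ℝ) : ℝ := du ω.2 p - dv ω.1 p

/-- The wedge product `(a,b) ∧ (c,d) = a·d − b·c` of two 1-forms (as a function on `ℝ²`). -/
def wedge (ω σ : OneForm) (p : ℝ × ℝ) : ℝ := ω.1 p * σ.2 p - ω.2 p * σ.1 p

/-- `Y = g' ∘ X`. -/
noncomputable def Yf (X : ℝ × ℝ → ℝ) (g : ℝ → ℝ) (p : ℝ × ℝ) : ℝ := deriv g (X p)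

/-- `Z = X·(g' ∘ X) − g ∘ X`. -/
noncomputable def Zf (X : ℝ × ℝ → ℝ) (g : ℝ → ℝ) (p : ℝ × ℝ) : ℝ :=
  X p * deriv g (X p) - g (X p)

/-- `η_x = (g'' ∘ X)·dX`. -/
noncomputable def etaX (X : ℝ × ℝ → ℝ) (g : ℝ → ℝ) : OneForm :=
  (fun p => deriv (deriv g) (X p) * du X p, fun p => deriv (deriv g) (X p) * dv X p)

/-- `η_y = −(1 + X·(h ∘ X))·dX`. -/
noncomputable def etaY (X : ℝ × ℝ → ℝ) (h : ℝ → ℝ) : OneForm :=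
  (fun p => -(1 + X p * h (X p)) * du X p, fun p => -(1 + X p * h (X p)) * dv X p)

/-- `η_z = (h ∘ X)·dX`. -/
noncomputable def etaZ (X : ℝ × ℝ → ℝ) (h : ℝ → ℝ) : OneForm :=
  (fun p => h (X p) * du X p, fun p => h (X p) * dv X p)


section helper
variable {X : ℝ × ℝ → ℝ} {f φ : ℝ → ℝ} {p : ℝ × ℝ}

lemma fderiv_comp_real (hf : ContDiff ℝ (⊤ : ℕ∞) f) (hX : ContDiff ℝ (⊤ : ℕ∞) X) (p) (w : ℝ × ℝ) :
    fderiv ℝ (fun q => f (X q)) p w = deriv f (X p) * fderiv ℝ X p w := by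
  have h1 : DifferentiableAt ℝ f (X p) := hf.differentiable (by simp) (X p)
  have h2 : DifferentiableAt ℝ X p := hX.differentiable (by simp) p
  rw [show (fun q => f (X q)) = f ∘ X from rfl, fderiv_comp p h1 h2]
  simp only [ContinuousLinearMap.comp_apply]
  have := (fderiv ℝ f (X p)).map_smul (fderiv ℝ X p w) 1
  simp only [smul_eq_mul, mul_one] at this
  rw [this, fderiv_apply_one_eq_deriv, mul_comm]

lemma fderiv_mul_real {a b : ℝ × ℝ → ℝ} (ha : DifferentiableAt ℝ a p)
    (hb : DifferentiableAt ℝ b p) (w : ℝ × ℝ) :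
    fderiv ℝ (fun q => a q * b q) p w = a p * fderiv ℝ b p w + fderiv ℝ a p w * b p := by
  rw [fderiv_fun_mul ha hb]
  simp [mul_comm]

lemma sym_second (hX : ContDiff ℝ (⊤ : ℕ∞) X) (p) (v w : ℝ × ℝ) :
    fderiv ℝ (fun q => fderiv ℝ X q w) p v = fderiv ℝ (fun q => fderiv ℝ X q v) p w := by
  have hd : Differentiable ℝ X := hX.differentiable (by simp)
  have hd2 : DifferentiableAt ℝ (fderiv ℝ X) p :=
    (hX.fderiv_right (m := 1) ((WithTop.coe_le_coe.mpr le_top))).differentiable one_ne_zero p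
  have e1 : fderiv ℝ (fun q => fderiv ℝ X q w) p v = fderiv ℝ (fderiv ℝ X) p v w := by
    rw [fderiv_clm_apply hd2 (differentiableAt_const w)]; simp
  have e2 : fderiv ℝ (fun q => fderiv ℝ X q v) p w = fderiv ℝ (fderiv ℝ X) p w v := by
    rw [fderiv_clm_apply hd2 (differentiableAt_const v)]; simp
  rw [e1, e2]
  exact second_derivative_symmetric (fun y => (hd y).hasFDerivAt) hd2.hasFDerivAt v w

lemma diff_fderiv_apply (hX : ContDiff ℝ (⊤ : ℕ∞) X) (p) (w : ℝ × ℝ) :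
    DifferentiableAt ℝ (fun q => fderiv ℝ X q w) p :=
  ((hX.fderiv_right (m := 1) (WithTop.coe_le_coe.mpr le_top)).differentiable one_ne_zero p).clm_apply (differentiableAt_const w)

lemma extDer_pull (hX : ContDiff ℝ (⊤ : ℕ∞) X) (hφ : ContDiff ℝ (⊤ : ℕ∞) φ) (p) :
    fderiv ℝ (fun q => φ (X q) * fderiv ℝ X q (0, 1)) p (1, 0)
      = fderiv ℝ (fun q => φ (X q) * fderiv ℝ X q (1, 0)) p (0, 1) := by
  have ha : DifferentiableAt ℝ (fun q => φ (X q)) p :=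
    ((hφ.comp hX).differentiable (by simp) p)
  rw [fderiv_mul_real ha (diff_fderiv_apply hX p _),
      fderiv_mul_real ha (diff_fderiv_apply hX p _),
      sym_second hX p (1, 0) (0, 1),
      fderiv_comp_real hφ hX p (1, 0), fderiv_comp_real hφ hX p (0, 1)]
  ring

end helper

/-- For smooth `X : ℝ² → ℝ` and `g, h : ℝ → ℝ`, the data `X`, `Y = g'∘X`,
`Z = X·(g'∘X) − g∘X`, `η_x = (g''∘X)dX`, `η_y = −(1 + X·(h∘X))dX`, `η_z = (h∘X)dX`
satisfy the field equations of the almost Poisson sigma model for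
`Λ = ∂_x ∧ (∂_y + x ∂_z)`: `dX = −η_y − X·η_z`, `dY = η_x`, `dZ = X·η_x`,
`dη_x = η_z ∧ η_x`, `dη_y = 0`, `dη_z = 0` — i.e. they define a skew algebroid
morphism `TΣ → T*ℝ³`. -/
theorem almost_poisson_sigma_model_solution
    (X : ℝ × ℝ → ℝ) (g h : ℝ → ℝ)
    (hX : ContDiff ℝ (⊤ : ℕ∞) X) (hg : ContDiff ℝ (⊤ : ℕ∞) g) (hh : ContDiff ℝ (⊤ : ℕ∞) h) :
    (∀ p, du X p = -(etaY X h).1 p - X p * (etaZ X h).1 p) ∧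
    (∀ p, dv X p = -(etaY X h).2 p - X p * (etaZ X h).2 p) ∧
    (∀ p, du (Yf X g) p = (etaX X g).1 p) ∧
    (∀ p, dv (Yf X g) p = (etaX X g).2 p) ∧
    (∀ p, du (Zf X g) p = X p * (etaX X g).1 p) ∧
    (∀ p, dv (Zf X g) p = X p * (etaX X g).2 p) ∧
    (∀ p, extDer (etaX X g) p = wedge (etaZ X h) (etaX X g) p) ∧
    (∀ p, extDer (etaY X h) p = 0) ∧
    (∀ p, extDer (etaZ X h) p = 0) := by
  have hd : Differentiable ℝ X := hX.differentiable (by simp)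
  have hDg : ContDiff ℝ (⊤ : ℕ∞) (deriv g) := ((contDiff_succ_iff_deriv (n := (⊤ : ℕ∞))).mp (by exact hg)).2.2
  have hDDg : ContDiff ℝ (⊤ : ℕ∞) (deriv (deriv g)) := ((contDiff_succ_iff_deriv (n := (⊤ : ℕ∞))).mp (by exact hDg)).2.2
  have hφy : ContDiff ℝ (⊤ : ℕ∞) (fun t => -(1 + t * h t)) :=
    ((contDiff_const.add (contDiff_id.mul hh))).neg
  have hZ : ∀ p w, fderiv ℝ (Zf X g) p w
      = X p * (deriv (deriv g) (X p) * fderiv ℝ X p w) := by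
    intro p w
    have h1 : DifferentiableAt ℝ (fun q => X q * deriv g (X q)) p :=
      (hd p).mul ((hDg.comp hX).differentiable (by simp) p)
    have h2 : DifferentiableAt ℝ (fun q => g (X q)) p :=
      (hg.comp hX).differentiable (by simp) p
    have : fderiv ℝ (Zf X g) p = fderiv ℝ (fun q => X q * deriv g (X q)) p
        - fderiv ℝ (fun q => g (X q)) p := fderiv_sub h1 h2
    rw [show (Zf X g) = fun q => X q * deriv g (X q) - g (X q) from rfl]
    rw [fderiv_fun_sub h1 h2, ContinuousLinearMap.sub_apply,
        fderiv_mul_real (a := X) (b := fun q => deriv g (X q)) (hd p)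
          ((hDg.comp hX).differentiable (by simp) p),
        fderiv_comp_real hDg hX p w, fderiv_comp_real hg hX p w]
    ring
  refine ⟨fun p => by simp only [etaY, etaZ]; ring,
          fun p => by simp only [etaY, etaZ]; ring,
          fun p => ?_, fun p => ?_, fun p => ?_, fun p => ?_, fun p => ?_,
          fun p => ?_, fun p => ?_⟩
  · exact fderiv_comp_real hDg hX p (1, 0)
  · exact fderiv_comp_real hDg hX p (0, 1)
  · exact hZ p (1, 0)
  · exact hZ p (0, 1)
  · have := extDer_pull hX hDDg p
    simp only [extDer, wedge, etaX, etaZ, du, dv] at *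
    rw [this]; ring
  · have := extDer_pull hX hφy p
    simp only [extDer, etaY, du, dv] at *
    rw [sub_eq_zero]
    simpa using this
  · have := extDer_pull hX hh p
    simp only [extDer, etaZ, du, dv] at *
    rw [sub_eq_zero]
    exact this
end
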